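/- arXiv:1101.5709 — 12 statements merged into one kernel-verified Lean document; each statement's English description precedes it below -/
import Mathlib

section
/- Let a be a non-invertible transformation of {1,...,n} of rank k and let (x y) be a transposition in S_n. Then a∘(x y) = a∘b, where either b is the identity or b is a product of at most three idempotent transformations each of rank k. -/
/-- The full transformation monoid on `{1,...,n}`, modeled as `Function.End (Fin n)`
(multiplication is composition). -/
abbrev Tn (n : ℕ) := Function.End (Fin n)

/-- A permutation viewed as a transformation. -/
def ofPerm {n : ℕ} (g : Equiv.Perm (Fin n)) : Tn n := ⇑g

/-- The rank of a transformation: the size of its image. -/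
def rnk {n : ℕ} (a : Tn n) : ℕ := (Finset.univ.image a).card

/-- The symmetric group embedded in `Tn n` as a set. -/
def perms (n : ℕ) : Set (Tn n) := Set.range (fun g : Equiv.Perm (Fin n) => ofPerm g)

/-- The `S_n`-conjugacy class of a transformation. -/
def conjClass {n : ℕ} (t : Tn n) : Set (Tn n) :=
  {s | ∃ g : Equiv.Perm (Fin n), s = ofPerm g⁻¹ * t * ofPerm g}


/-!
Only the action of `(x y)` on the image `T` of `a` matters. If exactly one of `x, y` lies in `T`,
the retraction of everything onto `T` with `x` replaced by `y` (or vice versa) already agrees with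
`(x y)` on `T`. If both lie in `T`, the non-surjectivity of `a` provides a hole `z ∉ T`, and
`(x y) = (z y)(y x)(x z)` factors the transposition into three such moves, each sliding a point of
the current image into the current hole.
-/

open Equiv Finset

section Retract

variable {α : Type*} [DecidableEq α]

def retract (S : Finset α) (d : α) : Function.End α := fun w => if w ∈ S then w else d

variable {S : Finset α} {d w : α}

lemma retract_apply_of_mem (hw : w ∈ S) : retract S d w = w := if_pos hw

lemma retract_apply_of_notMem (hw : w ∉ S) : retract S d w = d := if_neg hw

lemma retract_mem (hd : d ∈ S) (w : α) : retract S d w ∈ S := by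
  by_cases hw : w ∈ S
  · rwa [retract_apply_of_mem hw]
  · rwa [retract_apply_of_notMem hw]

lemma isIdempotentElem_retract (hd : d ∈ S) : IsIdempotentElem (retract S d) :=
  funext fun w => retract_apply_of_mem (retract_mem hd w)

lemma image_retract [Fintype α] (hd : d ∈ S) : univ.image (retract S d) = S := by
  ext w
  refine ⟨fun hw => ?_, fun hw => mem_image.mpr ⟨w, mem_univ w, retract_apply_of_mem hw⟩⟩
  obtain ⟨v, -, rfl⟩ := mem_image.mp hw
  exact retract_mem hd v

lemma retract_map_swap_apply {T : Finset α} {x y v : α} (hy : y ∉ T) (hv : v ∈ T) :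
    retract (T.map (swap x y).toEmbedding) y v = swap x y v := by
  by_cases hvx : v = x
  · subst hvx
    rw [swap_apply_left]
    exact retract_apply_of_notMem (by simpa [mem_map_equiv] using hy)
  · have hvy : v ≠ y := ne_of_mem_of_not_mem hv hy
    rw [swap_apply_of_ne_of_ne hvx hvy]
    exact retract_apply_of_mem (by simpa [mem_map_equiv, swap_apply_of_ne_of_ne hvx hvy] using hv)

end Retract

lemma Equiv.swap_mul_swap_mul_swap_of_ne {α : Type*} [DecidableEq α] {x y z : α}
    (hzx : z ≠ x) (hzy : z ≠ y) : swap z y * swap y x * swap x z = swap x y := by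
  ext v
  simp only [Perm.mul_apply, swap_apply_def]
  split_ifs <;> simp_all

lemma List.foldl_mul_left_mul {M : Type*} [Monoid M] (L : List M) (b c : M) :
    L.foldl (fun f e => e * f) (b * c) = L.foldl (fun f e => e * f) b * c := by
  induction L generalizing b with
  | nil => rfl
  | cons e L ih => simp only [List.foldl_cons, ← mul_assoc, ih]

variable {n : ℕ}

lemma rnk_retract {S : Finset (Fin n)} {d : Fin n} (hd : d ∈ S) : rnk (retract S d) = S.card :=
  congrArg card (image_retract hd)

lemma exists_idempotent_eqOn_swap {T : Finset (Fin n)} {x y : Fin n} (hx : x ∈ T) (hy : y ∉ T) :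
    ∃ e : Tn n, (IsIdempotentElem e ∧ rnk e = T.card) ∧ ∀ v ∈ T, e v = swap x y v := by
  have hy' : y ∈ T.map (swap x y).toEmbedding := by simpa [mem_map_equiv] using hx
  exact ⟨retract _ y, ⟨isIdempotentElem_retract hy', by rw [rnk_retract hy', card_map]⟩,
    fun v hv => retract_map_swap_apply hy hv⟩

lemma exists_idempotents_eqOn_swap {T : Finset (Fin n)} {z : Fin n} (hz : z ∉ T) {x y : Fin n}
    (hxy : x ≠ y) :
    ∃ L : List (Tn n), L.length ≤ 3 ∧ (∀ e ∈ L, IsIdempotentElem e ∧ rnk e = T.card) ∧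
      ∀ v ∈ T, L.foldl (fun f e => e * f) (1 : Tn n) v = swap x y v := by
  by_cases hx : x ∈ T <;> by_cases hy : y ∈ T
  · have hzx : z ≠ x := (ne_of_mem_of_not_mem hx hz).symm
    have hzy : z ≠ y := (ne_of_mem_of_not_mem hy hz).symm
    set T₁ := T.map (swap x z).toEmbedding
    set T₂ := T₁.map (swap y x).toEmbedding
    obtain ⟨e₁, he₁, h₁⟩ := exists_idempotent_eqOn_swap hx hz
    obtain ⟨e₂, he₂, h₂⟩ := exists_idempotent_eqOn_swap (T := T₁) (x := y) (y := x)
      (by simpa [T₁, mem_map_equiv, swap_apply_of_ne_of_ne hxy.symm hzy.symm] using hy)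
      (by simpa [T₁, mem_map_equiv] using hz)
    obtain ⟨e₃, he₃, h₃⟩ := exists_idempotent_eqOn_swap (T := T₂) (x := z) (y := y)
      (by simpa [T₁, T₂, mem_map_equiv, swap_apply_of_ne_of_ne hzy hzx] using hx)
      (by simpa [T₁, T₂, mem_map_equiv] using hz)
    refine ⟨[e₁, e₂, e₃], le_rfl, ?_, fun v hv => ?_⟩
    · simp only [List.mem_cons, List.not_mem_nil, or_false]
      rintro e (rfl | rfl | rfl)
      · exact he₁
      · simpa [T₁] using he₂
      · simpa [T₁, T₂] using he₃
    · have hv₁ : swap x z v ∈ T₁ := mem_map_of_mem _ hv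
      have hv₂ : swap y x (swap x z v) ∈ T₂ := mem_map_of_mem _ hv₁
      change e₃ (e₂ (e₁ v)) = _
      rw [h₁ v hv, h₂ _ hv₁, h₃ _ hv₂, ← swap_mul_swap_mul_swap_of_ne hzx hzy, Perm.mul_apply,
        Perm.mul_apply]
  · obtain ⟨e, he, h⟩ := exists_idempotent_eqOn_swap hx hy
    exact ⟨[e], by simp, by simpa using he, h⟩
  · obtain ⟨e, he, h⟩ := exists_idempotent_eqOn_swap hy hx
    exact ⟨[e], by simp, by simpa using he, fun v hv => swap_comm x y ▸ h v hv⟩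
  · refine ⟨[], by simp, by simp, fun v hv => ?_⟩
    exact (swap_apply_of_ne_of_ne (ne_of_mem_of_not_mem hv hx) (ne_of_mem_of_not_mem hv hy)).symm

/-- `a∘(x y)` equals `a` followed by a product of at most three idempotents of rank `k`. -/
theorem stmt2 (n k : ℕ) (a : Tn n) (ha : ¬ Function.Bijective a) (hk : rnk a = k)
    (x y : Fin n) (hxy : x ≠ y) :
    ∃ L : List (Tn n), L.length ≤ 3 ∧ (∀ e ∈ L, e * e = e ∧ rnk e = k) ∧
      ofPerm (Equiv.swap x y) * a = L.foldl (fun f e => e * f) a := by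
  have haT (w : Fin n) : a w ∈ univ.image a := mem_image_of_mem a (mem_univ w)
  obtain ⟨z, hz⟩ : ∃ z, z ∉ univ.image a := by
    by_contra! h
    exact ha (Finite.surjective_iff_bijective.mp fun z => by
      obtain ⟨w, -, hw⟩ := mem_image.mp (h z)
      exact ⟨w, hw⟩)
  obtain ⟨L, hlen, hL, hswap⟩ := exists_idempotents_eqOn_swap hz hxy
  refine ⟨L, hlen, hk ▸ hL, ?_⟩
  rw [← one_mul a, List.foldl_mul_left_mul]
  exact funext fun w => (hswap _ (haT w)).symm
end

section
/- If a is a non-invertible transformation of {1,...,n} of rank k, x ∈ image(a), and y ∉ image(a), then a∘(x y) = a∘e for some idempotent transformation e of rank k. -/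
/-!
The idempotent is `e = (x y)` on `im a` and constantly `y` off `im a`. It agrees with `(x y)` on
`im a`, which gives `a∘(x y) = a∘e`. Its image is `(x y)(im a)`, of size `k`, and it fixes that
set pointwise: `y` is fixed because `y ∉ im a`, and every other point of `(x y)(im a)` lies in
`im a` and avoids `x, y`. A map fixing its own image is idempotent.
-/

namespace Finset

variable {α : Type*} [DecidableEq α] (s : Finset α) (x y : α)

def swapCollapse (z : α) : α := if z ∈ s then Equiv.swap x y z else y

variable {s x y}

theorem swapCollapse_of_mem {z : α} (hz : z ∈ s) : swapCollapse s x y z = Equiv.swap x y z :=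
  if_pos hz

theorem swapCollapse_of_notMem {z : α} (hz : z ∉ s) : swapCollapse s x y z = y :=
  if_neg hz

theorem image_swapCollapse [Fintype α] (hx : x ∈ s) :
    univ.image (swapCollapse s x y) = s.image (Equiv.swap x y) := by
  ext z
  simp only [mem_image, mem_univ, true_and]
  constructor
  · rintro ⟨w, rfl⟩
    by_cases hw : w ∈ s
    · exact ⟨w, hw, (swapCollapse_of_mem hw).symm⟩
    · exact ⟨x, hx, by rw [Equiv.swap_apply_left, swapCollapse_of_notMem hw]⟩
  · rintro ⟨w, hw, rfl⟩
    exact ⟨w, swapCollapse_of_mem hw⟩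

theorem swapCollapse_apply_swap (hy : y ∉ s) {w : α} (hw : w ∈ s) :
    swapCollapse s x y (Equiv.swap x y w) = Equiv.swap x y w := by
  by_cases hwx : w = x
  · rw [hwx, Equiv.swap_apply_left, swapCollapse_of_notMem hy]
  · have hwy : w ≠ y := ne_of_mem_of_not_mem hw hy
    rw [Equiv.swap_apply_of_ne_of_ne hwx hwy, swapCollapse_of_mem hw]
    exact Equiv.swap_apply_of_ne_of_ne hwx hwy

theorem swapCollapse_idempotent (hy : y ∉ s) :
    swapCollapse s x y ∘ swapCollapse s x y = swapCollapse s x y := by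
  funext z
  by_cases hz : z ∈ s
  · simp only [Function.comp_apply, swapCollapse_of_mem hz, swapCollapse_apply_swap hy hz]
  · simp only [Function.comp_apply, swapCollapse_of_notMem hz, swapCollapse_of_notMem hy]

end Finset

theorem stmt3_general (n k : ℕ) (a : Tn n) (hk : rnk a = k)
    (x y : Fin n) (hx : x ∈ Set.range a) (hy : y ∉ Set.range a) :
    ∃ e : Tn n, e * e = e ∧ rnk e = k ∧ ofPerm (Equiv.swap x y) * a = e * a := by
  have hx' : x ∈ Finset.univ.image a := mem_image_univ_iff_mem_range.2 hx
  have hy' : y ∉ Finset.univ.image a := mt mem_image_univ_iff_mem_range.1 hy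
  refine ⟨Finset.swapCollapse (Finset.univ.image a) x y,
    Finset.swapCollapse_idempotent hy', ?_, ?_⟩
  · unfold rnk at hk ⊢
    rw [← hk, Finset.image_swapCollapse hx',
      Finset.card_image_of_injective _ (Equiv.injective _)]
  · funext z
    exact (Finset.swapCollapse_of_mem (Finset.mem_image_of_mem a (Finset.mem_univ z))).symm

/-- If `x` is in the image of `a` and `y` is not, then `a∘(x y) = a∘e` for an idempotent
of the same rank. -/
theorem stmt3 (n k : ℕ) (a : Tn n) (ha : ¬ Function.Bijective a) (hk : rnk a = k)
    (x y : Fin n) (hx : x ∈ Set.range a) (hy : y ∉ Set.range a) :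
    ∃ e : Tn n, e * e = e ∧ rnk e = k ∧ ofPerm (Equiv.swap x y) * a = e * a :=
  stmt3_general n k a hk x y hx hy
end

section
/- If a is a non-invertible transformation of {1,...,n} of rank k and x, y are both in the image of a, then a∘(x y) is a product of a with three idempotent transformations each of rank k. -/
open Finset

section Retraction

variable {α : Type*} [DecidableEq α] {I : Finset α} {d t : α}

theorem card_insert_erase_of_notMem {S : Finset α} {x z : α} (hx : x ∈ S) (hz : z ∉ S) :
    #(insert z (S.erase x)) = #S := by
  rw [card_insert_of_notMem (fun h => hz (mem_of_mem_erase h)), card_erase_add_one hx]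

def retraction (I : Finset α) (d : α) (t : α) : α := if t ∈ I then t else d

theorem retraction_apply_of_mem (h : t ∈ I) : retraction I d t = t := if_pos h

theorem retraction_apply_of_notMem (h : t ∉ I) : retraction I d t = d := if_neg h

theorem retraction_apply_mem (hd : d ∈ I) (t : α) : retraction I d t ∈ I := by
  by_cases h : t ∈ I
  · rwa [retraction_apply_of_mem h]
  · rwa [retraction_apply_of_notMem h]

theorem retraction_comp_self (hd : d ∈ I) : retraction I d ∘ retraction I d = retraction I d :=
  funext fun t => retraction_apply_of_mem (retraction_apply_mem hd t)

theorem image_retraction [Fintype α] (hd : d ∈ I) : univ.image (retraction I d) = I := by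
  ext t
  refine ⟨fun ht => ?_, fun ht => mem_image.2 ⟨t, mem_univ t, retraction_apply_of_mem ht⟩⟩
  obtain ⟨s, -, rfl⟩ := mem_image.1 ht
  exact retraction_apply_mem hd s

theorem retraction_retraction_retraction_eq_swap {S : Finset α} {x y z s : α} (hxy : x ≠ y)
    (hx : x ∈ S) (hy : y ∈ S) (hz : z ∉ S) (hs : s ∈ S) :
    retraction S y (retraction (insert z (S.erase y)) x (retraction (insert z (S.erase x)) z s)) =
      Equiv.swap x y s := by
  have hzx : z ≠ x := ne_of_mem_of_not_mem hx hz |>.symm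
  have hzy : z ≠ y := ne_of_mem_of_not_mem hy hz |>.symm
  have hsz : s ≠ z := ne_of_mem_of_not_mem hs hz
  by_cases hsx : s = x
  · subst hsx
    rw [retraction_apply_of_notMem (I := insert z (S.erase s)) (by simp [hzx.symm]),
      retraction_apply_of_mem (mem_insert_self z _), retraction_apply_of_notMem hz,
      Equiv.swap_apply_left]
  by_cases hsy : s = y
  · subst hsy
    rw [retraction_apply_of_mem (I := insert z (S.erase x)) (by simp [hxy.symm, hs]),
      retraction_apply_of_notMem (I := insert z (S.erase s)) (by simp [hsz]),
      retraction_apply_of_mem hx, Equiv.swap_apply_right]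
  · rw [retraction_apply_of_mem (I := insert z (S.erase x)) (by simp [hsx, hs]),
      retraction_apply_of_mem (I := insert z (S.erase y)) (by simp [hsy, hs]),
      retraction_apply_of_mem hs, Equiv.swap_apply_of_ne_of_ne hsx hsy]

end Retraction

theorem rnk_retraction {n : ℕ} {I : Finset (Fin n)} {d : Fin n} (hd : d ∈ I) :
    rnk (retraction I d) = #I :=
  congrArg card (image_retraction hd)

/-- If `x, y` are both in the image of `a`, then `a∘(x y)` is `a` followed by three
idempotents of rank `k`. -/
theorem stmt4 (n k : ℕ) (a : Tn n) (ha : ¬ Function.Bijective a) (hk : rnk a = k)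
    (x y : Fin n) (hxy : x ≠ y) (hx : x ∈ Set.range a) (hy : y ∈ Set.range a) :
    ∃ e₁ e₂ e₃ : Tn n, (e₁ * e₁ = e₁ ∧ rnk e₁ = k) ∧ (e₂ * e₂ = e₂ ∧ rnk e₂ = k) ∧
      (e₃ * e₃ = e₃ ∧ rnk e₃ = k) ∧
      ofPerm (Equiv.swap x y) * a = e₃ * e₂ * e₁ * a := by
  set S := univ.image a
  have mem_S : ∀ t, a t ∈ S := fun t => mem_image_of_mem a (mem_univ t)
  obtain ⟨z, hz⟩ : ∃ z, z ∉ S := by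
    by_contra! h
    exact ha (Finite.surjective_iff_bijective.mp fun z =>
      (mem_image.1 (h z)).imp fun _ => And.right)
  have hxS : x ∈ S := by obtain ⟨u, rfl⟩ := hx; exact mem_S u
  have hyS : y ∈ S := by obtain ⟨v, rfl⟩ := hy; exact mem_S v
  have hz_mem : z ∈ insert z (S.erase x) := mem_insert_self z _
  have hx_mem : x ∈ insert z (S.erase y) := mem_insert_of_mem (mem_erase.2 ⟨hxy, hxS⟩)
  refine ⟨retraction (insert z (S.erase x)) z, retraction (insert z (S.erase y)) x, retraction S y,
    ⟨retraction_comp_self hz_mem, ?_⟩, ⟨retraction_comp_self hx_mem, ?_⟩,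
    ⟨retraction_comp_self hyS, (rnk_retraction hyS).trans hk⟩,
    funext fun t => (retraction_retraction_retraction_eq_swap hxy hxS hyS hz (mem_S t)).symm⟩
  · rw [rnk_retraction hz_mem, card_insert_erase_of_notMem hxS hz]; exact hk
  · rw [rnk_retraction hx_mem, card_insert_erase_of_notMem hyS hz]; exact hk
end

section
/- Every non-invertible transformation a of {1,...,n} is a product of idempotent transformations all of the same rank as a. -/
/-!
Write `a = σ ∘ π` with `σ` a permutation and `π` an idempotent with the same kernel, hence the
same rank `r < n`, as `a`. It then suffices that every permutation agrees on every `r`-set `I`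
with a product of idempotents of rank `r`, and since such agreements compose, it suffices to treat
transpositions. For `(u w)` with `u ∈ I`, `w ∉ I` a single retraction onto `I - u + w` does it;
if both `u, v ∈ I`, pick `p ∉ I` (possible as `r < n`) and use `(u v) = (p v)(v u)(u p)`, each
factor again moving one point of the current image to a point outside it.
-/

open Finset in
theorem Function.card_image_univ_lt_of_not_bijective {α : Type*} [Fintype α] [DecidableEq α]
    {f : α → α} (hf : ¬ f.Bijective) : #(univ.image f) < Fintype.card α := by
  refine card_image_le.lt_of_ne fun h => hf (Finite.injective_iff_bijective.mp ?_)
  simpa [Set.injOn_univ] using card_image_iff.mp h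

theorem Set.InjOn.exists_perm_eqOn {α : Type*} [Fintype α] {s : Set α} {f : α → α}
    (hf : s.InjOn f) : ∃ σ : Equiv.Perm α, s.EqOn σ f := by
  classical
  obtain ⟨g, hg⟩ := Set.MapsTo.exists_equiv_extend_of_card_eq (t := Finset.univ)
    Finset.card_univ.symm (fun x _ => by simp) hf
  exact ⟨g.trans (Equiv.subtypeUnivEquiv Finset.mem_univ), hg⟩

open Finset in
/-- `π = s ∘ f` for a right inverse `s` of `f` on its range is an idempotent with the kernel
of `f`, and `f` is injective on the range of `π`, where it extends to a permutation. -/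
theorem Function.exists_eq_perm_comp_idempotent {α : Type*} [Fintype α] [DecidableEq α]
    [Nonempty α] (f : α → α) :
    ∃ π : α → α, π ∘ π = π ∧ #(univ.image π) = #(univ.image f) ∧
      ∃ σ : Equiv.Perm α, f = σ ∘ π := by
  set s := invFun f
  have hs : ∀ x, f (s (f x)) = f x := fun x => invFun_eq ⟨x, rfl⟩
  have hs_inj : Set.InjOn s (Set.range f) := by
    rintro _ ⟨x, rfl⟩ _ ⟨y, rfl⟩ h
    rw [← hs x, ← hs y, h]
  refine ⟨s ∘ f, funext fun x => congrArg s (hs x), ?_, ?_⟩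
  · rw [← image_image, card_image_of_injOn (hs_inj.mono (by simp))]
  · have hf_inj : Set.InjOn f (Set.range (s ∘ f)) := by
      rintro _ ⟨x, rfl⟩ _ ⟨y, rfl⟩ h
      simp only [comp_apply, hs] at h
      simp [h]
    obtain ⟨σ, hσ⟩ := hf_inj.exists_perm_eqOn
    exact ⟨σ, funext fun x => ((hσ ⟨x, rfl⟩).trans (hs x)).symm⟩

theorem Equiv.swap_eq_swap_mul_swap_mul_swap {α : Type*} [DecidableEq α] {u v p : α}
    (huv : u ≠ v) (hup : u ≠ p) (hvp : v ≠ p) :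
    swap u v = swap p v * swap v u * swap u p := by
  ext x
  simp only [Perm.mul_apply, swap_apply_def]
  split_ifs <;> grind

namespace Tn

open Equiv Finset

variable {n : ℕ}

theorem mul_apply (f g : Tn n) (x : Fin n) : (f * g) x = f (g x) := rfl

def retraction (s : Finset (Fin n)) (c : Fin n) : Tn n := fun x => if x ∈ s then x else c

section Retraction

variable {s : Finset (Fin n)} {c x : Fin n}

theorem retraction_of_mem (hx : x ∈ s) : retraction s c x = x := if_pos hx

theorem retraction_of_notMem (hx : x ∉ s) : retraction s c x = c := if_neg hx

theorem isIdempotentElem_retraction (hc : c ∈ s) : IsIdempotentElem (retraction s c) := by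
  funext x
  by_cases hx : x ∈ s
  · simp only [mul_apply, retraction_of_mem hx]
  · simp only [mul_apply, retraction_of_notMem hx, retraction_of_mem hc]

theorem rnk_retraction (hc : c ∈ s) : rnk (retraction s c) = #s := by
  unfold rnk
  congr 1
  ext y
  refine ⟨fun hy => ?_, fun hy => mem_image.mpr ⟨y, mem_univ _, retraction_of_mem hy⟩⟩
  obtain ⟨x, -, rfl⟩ := mem_image.mp hy
  by_cases hx : x ∈ s
  · rwa [retraction_of_mem hx]
  · rwa [retraction_of_notMem hx]

end Retraction

def IdemProdOn (r : ℕ) (I : Finset (Fin n)) (σ : Perm (Fin n)) : Prop :=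
  ∃ L : List (Tn n), (∀ e ∈ L, IsIdempotentElem e ∧ rnk e = r) ∧ ∀ x ∈ I, L.prod x = σ x

variable {r : ℕ} {I : Finset (Fin n)}

theorem IdemProdOn.of_forall_mem_apply_eq {σ : Perm (Fin n)} (hσ : ∀ x ∈ I, σ x = x) :
    IdemProdOn r I σ :=
  ⟨[], by simp, fun x hx => (hσ x hx).symm⟩

theorem IdemProdOn.mul {σ τ : Perm (Fin n)} (hσ : IdemProdOn r I σ)
    (hτ : IdemProdOn r (I.map σ.toEmbedding) τ) : IdemProdOn r I (τ * σ) := by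
  obtain ⟨L, hL, hLσ⟩ := hσ
  obtain ⟨M, hM, hMτ⟩ := hτ
  refine ⟨M ++ L, fun e he => (List.mem_append.mp he).elim (hM e) (hL e), fun x hx => ?_⟩
  rw [List.prod_append, mul_apply, hLσ x hx]
  exact hMτ _ (mem_map_of_mem σ.toEmbedding hx)

theorem idemProdOn_swap_of_mem_of_notMem (hI : #I = r) {u w : Fin n} (hu : u ∈ I) (hw : w ∉ I) :
    IdemProdOn r I (swap u w) := by
  have huw : u ≠ w := ne_of_mem_of_not_mem hu hw
  have hw' : w ∈ insert w (I.erase u) := mem_insert_self _ _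
  refine ⟨[retraction (insert w (I.erase u)) w], ?_, fun x hx => ?_⟩
  · simp only [List.mem_singleton, forall_eq]
    refine ⟨isIdempotentElem_retraction hw', ?_⟩
    rw [rnk_retraction hw', card_insert_of_notMem (fun h => hw (mem_of_mem_erase h)),
      card_erase_of_mem hu, hI, Nat.sub_add_cancel (card_pos.mpr ⟨u, hu⟩ |>.trans_eq hI)]
  · rw [List.prod_singleton]
    obtain rfl | hxu := eq_or_ne x u
    · rw [retraction_of_notMem (by simp [huw]), swap_apply_left]
    · rw [retraction_of_mem (mem_insert_of_mem (mem_erase.mpr ⟨hxu, hx⟩)),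
        swap_apply_of_ne_of_ne hxu (ne_of_mem_of_not_mem hx hw)]

theorem idemProdOn_swap (hr : r < n) (hI : #I = r) (u v : Fin n) :
    IdemProdOn r I (swap u v) := by
  by_cases hu : u ∈ I <;> by_cases hv : v ∈ I
  · obtain rfl | huv := eq_or_ne u v
    · exact .of_forall_mem_apply_eq (by simp)
    obtain ⟨p, -, hp⟩ := exists_mem_notMem_of_card_lt_card (s := I) (t := univ) (by simpa [hI])
    have hup : u ≠ p := ne_of_mem_of_not_mem hu hp
    have hvp : v ≠ p := ne_of_mem_of_not_mem hv hp
    rw [swap_eq_swap_mul_swap_mul_swap huv hup hvp]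
    refine (idemProdOn_swap_of_mem_of_notMem hI hu hp).mul
      ((idemProdOn_swap_of_mem_of_notMem (by simpa) ?_ ?_).mul
        (idemProdOn_swap_of_mem_of_notMem (by simpa) ?_ ?_)) <;>
    simp [mem_map_equiv, swap_apply_of_ne_of_ne, *, huv.symm, hup.symm, hvp.symm]
  · exact idemProdOn_swap_of_mem_of_notMem hI hu hv
  · exact swap_comm u v ▸ idemProdOn_swap_of_mem_of_notMem hI hv hu
  · exact .of_forall_mem_apply_eq fun x hx =>
      swap_apply_of_ne_of_ne (ne_of_mem_of_not_mem hx hu) (ne_of_mem_of_not_mem hx hv)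

theorem idemProdOn_perm (hr : r < n) (hI : #I = r) (σ : Perm (Fin n)) : IdemProdOn r I σ :=
  Perm.swap_induction_on σ (.of_forall_mem_apply_eq fun _ _ => rfl) fun _ u v _ hf =>
    hf.mul (idemProdOn_swap hr (by rw [card_map, hI]) u v)

end Tn

/-- Every singular transformation is a product of idempotents of the same rank. -/
theorem stmt5 (n : ℕ) (a : Tn n) (ha : ¬ Function.Bijective a) :
    ∃ L : List (Tn n), L ≠ [] ∧ (∀ e ∈ L, e * e = e ∧ rnk e = rnk a) ∧ a = L.prod := by
  have hr : rnk a < n :=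
    (Function.card_image_univ_lt_of_not_bijective ha).trans_eq (Fintype.card_fin n)
  have : Nonempty (Fin n) := ⟨⟨0, by omega⟩⟩
  obtain ⟨π, hπ, hπr, σ, haσ⟩ := Function.exists_eq_perm_comp_idempotent a
  obtain ⟨L, hL, hLσ⟩ := Tn.idemProdOn_perm hr hπr σ
  refine ⟨L ++ ([π] : List (Tn n)), by simp, fun e he => ?_, funext fun x => ?_⟩
  · rcases List.mem_append.mp he with he | he
    · exact hL e he
    · exact List.mem_singleton.mp he ▸ ⟨hπ, hπr⟩
  · rw [List.prod_append]
    change a x = L.prod (π x)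
    exact (congrFun haσ x).trans (hLσ _ (Finset.mem_image_of_mem π (Finset.mem_univ x))).symm
end

section
/- For each k with 1 ≤ k ≤ n−1, the set {a ∈ T_n : rank(a) ≤ k} is a two-sided ideal of T_n and is generated as a semigroup by its own idempotents. (Howie's theorem: every ideal of the singular part I_n of T_n is generated by its idempotents.) -/
/-!
Let `a` have rank `r ≤ k < n`. If `s` is a section of `a` over its image, `ε = s ∘ a` is an
idempotent of rank `r`, and `a = π ∘ ε` for every `π` agreeing with `a` on the `r`-set `im ε`.
So it suffices that any map `f` agrees, on any nonempty set `S` with `|S| ≤ k`, with a product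
of idempotents of rank `≤ k`. Such a product is built from retractions onto sets `S'` with
`|S'| ≤ k` that send one point `x ∈ S` into `S'` and fix `S \ {x}`. If `f` sends `x` out of
`S`, retract `x` onto `f x`; if `f` identifies `x` with another point of `S`, retract `x` onto
that point: either way fewer points of `S` are moved by what remains to be realised. If `f`
permutes `S`, retract a moved point onto a point outside `S` (there is one as `|S| < n`): the
number of moved points stays the same, but now some point leaves the set, so the first case
applies next.
-/

open Finset

namespace Function.End

variable {α : Type*} [DecidableEq α]

def retraction (S : Finset α) (t : α) : Function.End α := fun y => if y ∈ S then y else t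

section Retraction

variable {S : Finset α} {t y : α}

lemma retraction_of_mem (t : α) (hy : y ∈ S) : retraction S t y = y := if_pos hy

lemma retraction_of_notMem (t : α) (hy : y ∉ S) : retraction S t y = t := if_neg hy

lemma retraction_mem (ht : t ∈ S) (y : α) : retraction S t y ∈ S := by
  unfold retraction
  split_ifs with hy
  exacts [hy, ht]

lemma isIdempotentElem_retraction (ht : t ∈ S) : IsIdempotentElem (retraction S t) :=
  funext fun y => retraction_of_mem t (retraction_mem ht y)

end Retraction

variable [Fintype α]

def rank (a : Function.End α) : ℕ := #(univ.image a)

lemma rank_mul_le_left (t a : Function.End α) : rank (t * a) ≤ rank a :=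
  (congrArg card image_image.symm).trans_le card_image_le

lemma rank_mul_le_right (a t : Function.End α) : rank (a * t) ≤ rank a :=
  card_le_card (image_subset_iff.mpr fun x _ => mem_image_of_mem a (mem_univ (t x)))

lemma rank_retraction_le {S : Finset α} {t : α} (ht : t ∈ S) : rank (retraction S t) ≤ #S :=
  card_le_card (image_subset_iff.mpr fun y _ => retraction_mem ht y)

variable (α) in
def rankLE (k : ℕ) : Subsemigroup (Function.End α) where
  carrier := {a | rank a ≤ k}
  mul_mem' ha _ := (rank_mul_le_right _ _).trans ha

variable (α) in
def idempotentsRankLE (k : ℕ) : Set (Function.End α) :=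
  {e | rank e ≤ k ∧ IsIdempotentElem e}

variable {k : ℕ}

lemma retraction_mem_closure {S : Finset α} {t : α} (ht : t ∈ S) (hSk : #S ≤ k) :
    retraction S t ∈ Subsemigroup.closure (idempotentsRankLE α k) :=
  Subsemigroup.subset_closure
    ⟨(rank_retraction_le ht).trans hSk, isIdempotentElem_retraction ht⟩

def IsIdempotentProductOn (k : ℕ) (S : Finset α) (f : α → α) : Prop :=
  ∃ π ∈ Subsemigroup.closure (idempotentsRankLE α k), Set.EqOn π f S

def movedPoints (S : Finset α) (f : α → α) : Finset α := {y ∈ S | f y ≠ y}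

section Moves

variable {S : Finset α} {f : α → α}

lemma isIdempotentProductOn_of_forall_eq (hS : S.Nonempty) (hSk : #S ≤ k)
    (hf : ∀ y ∈ S, f y = y) : IsIdempotentProductOn k S f := by
  obtain ⟨t, ht⟩ := hS
  exact ⟨retraction S t, retraction_mem_closure ht hSk,
    fun y hy => (retraction_of_mem t hy).trans (hf y hy).symm⟩

lemma IsIdempotentProductOn.of_retraction {S' : Finset α} {t : α} {g : α → α}
    (hg : IsIdempotentProductOn k S' g) (ht : t ∈ S') (hS'k : #S' ≤ k)
    (hfg : ∀ y ∈ S, g (retraction S' t y) = f y) : IsIdempotentProductOn k S f := by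
  obtain ⟨π, hπ, hπg⟩ := hg
  refine ⟨π * retraction S' t, mul_mem hπ (retraction_mem_closure ht hS'k), fun y hy => ?_⟩
  rw [← hfg y hy]
  exact hπg (retraction_mem ht y)

lemma isIdempotentProductOn_of_map_notMem (hSk : #S ≤ k) {y : α} (hy : y ∈ S) (hfy : f y ∉ S)
    (ih : ∀ (S' : Finset α) (g : α → α), S'.Nonempty → #S' ≤ k →
      #(movedPoints S' g) < #(movedPoints S f) → IsIdempotentProductOn k S' g) :
    IsIdempotentProductOn k S f := by
  have hyfy : y ≠ f y := fun h => hfy (h ▸ hy)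
  set S' := insert (f y) (S.erase y)
  have hS'k : #S' ≤ k := (card_insert_le _ _).trans ((card_erase_add_one hy).le.trans hSk)
  have hmoved : movedPoints S' (update f (f y) (f y)) ⊆ (movedPoints S f).erase y := by
    intro u hu
    simp only [movedPoints, S', mem_filter, mem_insert, mem_erase] at hu ⊢
    rcases hu with ⟨rfl | ⟨huy, huS⟩, hmov⟩
    · simp at hmov
    · have hu : u ≠ f y := fun h => hfy (h ▸ huS)
      exact ⟨huy, huS, by simpa [update_of_ne hu] using hmov⟩
  have hy' : y ∈ movedPoints S f := mem_filter.mpr ⟨hy, hyfy.symm⟩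
  refine (ih S' (update f (f y) (f y)) (insert_nonempty _ _) hS'k ?_).of_retraction
    (mem_insert_self _ _) hS'k ?_
  · exact (card_le_card hmoved).trans_lt (card_erase_lt_of_mem hy')
  · intro u hu
    by_cases huy : u = y
    · subst huy
      rw [retraction_of_notMem _ (by simp [S', hyfy]), update_self]
    · have hufy : u ≠ f y := fun h => hfy (h ▸ hu)
      rw [retraction_of_mem _ (mem_insert_of_mem (mem_erase.mpr ⟨huy, hu⟩)),
        update_of_ne hufy]

lemma isIdempotentProductOn_of_map_eq (hSk : #S ≤ k) {x t : α} (hx : x ∈ S) (ht : t ∈ S)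
    (hxt : x ≠ t) (hf : f x = f t) (hfx : f x ≠ x)
    (ih : ∀ (S' : Finset α) (g : α → α), S'.Nonempty → #S' ≤ k →
      #(movedPoints S' g) < #(movedPoints S f) → IsIdempotentProductOn k S' g) :
    IsIdempotentProductOn k S f := by
  have ht' : t ∈ S.erase x := mem_erase.mpr ⟨hxt.symm, ht⟩
  have hS'k : #(S.erase x) ≤ k := (card_erase_le).trans hSk
  have hmoved : movedPoints (S.erase x) f = (movedPoints S f).erase x := filter_erase _ _ _
  have hx' : x ∈ movedPoints S f := mem_filter.mpr ⟨hx, hfx⟩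
  refine (ih (S.erase x) f ⟨t, ht'⟩ hS'k ?_).of_retraction ht' hS'k ?_
  · exact hmoved ▸ card_erase_lt_of_mem hx'
  · intro u hu
    by_cases hux : u = x
    · subst hux
      rw [retraction_of_notMem _ (notMem_erase u S), hf]
    · rw [retraction_of_mem _ (mem_erase.mpr ⟨hux, hu⟩)]

lemma isIdempotentProductOn_of_bijOn (hk : k < Fintype.card α) (hSk : #S ≤ k)
    (hmaps : Set.MapsTo f S S) (hinj : Set.InjOn f S) {x : α} (hx : x ∈ S) (hfx : f x ≠ x)
    (hout : ∀ (S' : Finset α) (g : α → α), S'.Nonempty → #S' ≤ k →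
      #(movedPoints S' g) ≤ #(movedPoints S f) → ¬ Set.MapsTo g S' S' →
      IsIdempotentProductOn k S' g) :
    IsIdempotentProductOn k S f := by
  obtain ⟨z, -, hz⟩ := exists_mem_notMem_of_card_lt_card (s := S) (t := univ)
    (hSk.trans_lt (by rwa [card_univ]))
  have hxz : x ≠ z := fun h => hz (h ▸ hx)
  set S' := insert z (S.erase x)
  set g := update f z (f x)
  have hS'k : #S' ≤ k := (card_insert_le _ _).trans ((card_erase_add_one hx).le.trans hSk)
  have hmoved : movedPoints S' g ⊆ insert z ((movedPoints S f).erase x) := by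
    intro u hu
    simp only [movedPoints, S', g, mem_filter, mem_insert, mem_erase] at hu ⊢
    rcases hu with ⟨rfl | ⟨hux, huS⟩, hmov⟩
    · exact Or.inl rfl
    · have huz : u ≠ z := fun h => hz (h ▸ huS)
      exact Or.inr ⟨hux, huS, by simpa [update_of_ne huz] using hmov⟩
  have hx' : x ∈ movedPoints S f := mem_filter.mpr ⟨hx, hfx⟩
  -- `g` sends the `f`-preimage of `x` in `S` to `x ∉ S'`
  have hleave : ¬ Set.MapsTo g S' S' := by
    obtain ⟨w, hw, hwx⟩ := surjOn_of_injOn_of_card_le f hmaps hinj le_rfl hx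
    have hwx' : w ≠ x := fun h => hfx (h ▸ hwx)
    have hwz : w ≠ z := fun h => hz (h ▸ hw)
    intro hg
    have := hg (mem_insert_of_mem (mem_erase.mpr ⟨hwx', hw⟩))
    simp [S', g, update_of_ne hwz, hwx, hxz] at this
  refine (hout S' g (insert_nonempty _ _) hS'k ?_ hleave).of_retraction
    (mem_insert_self _ _) hS'k ?_
  · calc #(movedPoints S' g) ≤ #(insert z ((movedPoints S f).erase x)) := card_le_card hmoved
      _ ≤ #((movedPoints S f).erase x) + 1 := card_insert_le _ _
      _ = #(movedPoints S f) := card_erase_add_one hx'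
  · intro u hu
    by_cases hux : u = x
    · subst hux
      rw [retraction_of_notMem _ (by simp [S', hxz])]
      exact update_self _ _ _
    · have huz : u ≠ z := fun h => hz (h ▸ hu)
      rw [retraction_of_mem _ (mem_insert_of_mem (mem_erase.mpr ⟨hux, hu⟩))]
      exact update_of_ne huz _ _

end Moves

theorem isIdempotentProductOn (hk : k < Fintype.card α) (S : Finset α) (f : α → α)
    (hS : S.Nonempty) (hSk : #S ≤ k) : IsIdempotentProductOn k S f := by
  induction hm : #(movedPoints S f) using Nat.strong_induction_on generalizing S f with
  | _ m ih =>
  have ih' : ∀ (S' : Finset α) (g : α → α), S'.Nonempty → #S' ≤ k →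
      #(movedPoints S' g) < #(movedPoints S f) → IsIdempotentProductOn k S' g :=
    fun S' g hS' hS'k hlt => ih _ (hm ▸ hlt) S' g hS' hS'k rfl
  have hout : ∀ (S' : Finset α) (g : α → α), S'.Nonempty → #S' ≤ k →
      #(movedPoints S' g) ≤ #(movedPoints S f) → ¬ Set.MapsTo g S' S' →
      IsIdempotentProductOn k S' g := by
    intro S' g _ hS'k hle hmaps
    obtain ⟨y, hy, hgy⟩ : ∃ y ∈ S', g y ∉ S' := by simpa [Set.MapsTo] using hmaps
    exact isIdempotentProductOn_of_map_notMem hS'k hy hgy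
      fun S'' g' hS'' hS''k hlt => ih' S'' g' hS'' hS''k (hlt.trans_le hle)
  by_cases hfix : ∀ y ∈ S, f y = y
  · exact isIdempotentProductOn_of_forall_eq hS hSk hfix
  push Not at hfix
  obtain ⟨x, hx, hfx⟩ := hfix
  by_cases hmaps : Set.MapsTo f S S
  · by_cases hinj : Set.InjOn f S
    · exact isIdempotentProductOn_of_bijOn hk hSk hmaps hinj hx hfx hout
    obtain ⟨u, hu, v, hv, hfuv, huv⟩ : ∃ u ∈ S, ∃ v ∈ S, f u = f v ∧ u ≠ v := by
      simpa [Set.InjOn] using hinj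
    by_cases hfu : f u = u
    · exact isIdempotentProductOn_of_map_eq hSk hv hu huv.symm hfuv.symm
        (by rwa [← hfuv, hfu]) ih'
    · exact isIdempotentProductOn_of_map_eq hSk hu hv huv hfuv hfu ih'
  · exact hout S f hS hSk le_rfl hmaps

theorem mem_closure_idempotentsRankLE (hk : k < Fintype.card α) {a : Function.End α}
    (ha : rank a ≤ k) : a ∈ Subsemigroup.closure (idempotentsRankLE α k) := by
  have : Nonempty α := Fintype.card_pos_iff.mp (k.zero_le.trans_lt hk)
  set ε : Function.End α := invFun a ∘ a
  have haε : ∀ x, a (ε x) = a x := fun x => invFun_eq (f := (a : α → α)) ⟨x, rfl⟩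
  have hε : IsIdempotentElem ε := funext fun x => congrArg (invFun a) (haε x)
  have hεk : rank ε ≤ k := (rank_mul_le_left (invFun a) a).trans ha
  obtain ⟨π, hπ, hπa⟩ := isIdempotentProductOn hk _ a (univ_nonempty.image ε) hεk
  have hfact : a = π * ε := funext fun x => by
    rw [← haε x]
    exact (hπa (mem_image_of_mem ε (mem_univ x))).symm
  exact hfact ▸ mul_mem hπ (Subsemigroup.subset_closure ⟨hεk, hε⟩)

theorem closure_idempotentsRankLE (hk : k < Fintype.card α) :
    Subsemigroup.closure (idempotentsRankLE α k) = rankLE α k :=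
  le_antisymm (Subsemigroup.closure_le.mpr fun _ he => he.1)
    fun _ ha => mem_closure_idempotentsRankLE hk ha

end Function.End

open Function.End in
/-- Howie's theorem: each `{a : rank a ≤ k}` (`1 ≤ k ≤ n-1`) is a two-sided ideal of `T_n`
and is generated as a semigroup by its own idempotents. -/
theorem stmt6 (n k : ℕ) (hk1 : 1 ≤ k) (hk2 : k ≤ n - 1) :
    (∀ a : Tn n, rnk a ≤ k → ∀ t : Tn n, rnk (t * a) ≤ k ∧ rnk (a * t) ≤ k) ∧
    {a : Tn n | rnk a ≤ k} =
      ↑(Subsemigroup.closure {e : Tn n | rnk e ≤ k ∧ e * e = e}) := by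
  have hkn : k < Fintype.card (Fin n) := by rw [Fintype.card_fin]; omega
  refine ⟨fun a ha t => ⟨(rank_mul_le_left t a).trans ha, (rank_mul_le_right a t).trans ha⟩,
    ?_⟩
  exact congrArg SetLike.coe (closure_idempotentsRankLE hkn).symm
end

section
/- Every singular transformation of {1,...,n} is a product of idempotent transformations of rank n−1. -/
/-!
Write `collapse i j` for the idempotent of rank `n - 1` sending `i` to `j` and fixing every other
point. Right multiplication by `collapse i j` overwrites the value at `i` by the value at `j`, so a
point whose value is duplicated can serve as a spare register: three overwrites through it realise
a transposition, hence `σ * collapse i j` lies in the semigroup generated by these idempotents for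
every permutation `σ`. A singular `a` has two points `i ≠ j` with `a i = a j` and misses some
value `v`; then `a = update a i v * collapse i j`, where `update a i v` is either a permutation or
a singular map of larger rank.
-/

open Function Equiv

theorem Function.update_comp_update_id {α β : Type*} [DecidableEq α] (f : α → β) {i j : α}
    (hij : i ≠ j) (hf : f i = f j) (v : β) : update f i v ∘ update id i j = f := by
  rw [comp_update, comp_id, update_of_ne hij.symm, update_idem, ← hf, update_eq_self]

theorem Function.range_ssubset_range_update {α β : Type*} [DecidableEq α] {f : α → β} {i j : α}
    (hij : i ≠ j) (hf : f i = f j) {v : β} (hv : v ∉ Set.range f) :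
    Set.range f ⊂ Set.range (update f i v) := by
  refine (Set.ssubset_iff_of_subset ?_).mpr ⟨v, ⟨i, update_self i v f⟩, hv⟩
  rintro _ ⟨x, rfl⟩
  rcases eq_or_ne x i with rfl | hx
  · exact ⟨j, by rw [update_of_ne hij.symm, hf]⟩
  · exact ⟨x, update_of_ne hx v f⟩

theorem Subsemigroup.exists_list_prod_of_mem_closure {M : Type*} [Monoid M] {s : Set M} {x : M}
    (hx : x ∈ closure s) : ∃ L : List M, L ≠ [] ∧ (∀ e ∈ L, e ∈ s) ∧ x = L.prod := by
  induction hx using closure_induction with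
  | mem x hx => exact ⟨[x], List.cons_ne_nil _ _, by simpa using hx, by simp⟩
  | mul x y _ _ hx hy =>
    obtain ⟨L, hL, hLs, rfl⟩ := hx
    obtain ⟨L', -, hL's, rfl⟩ := hy
    refine ⟨L ++ L', by simp [hL], fun e he => ?_, List.prod_append.symm⟩
    exact (List.mem_append.mp he).elim (hLs e) (hL's e)

namespace Tn

variable {n : ℕ}

def corankOneIdempotents (n : ℕ) : Set (Tn n) := {e | IsIdempotentElem e ∧ rnk e = n - 1}

def collapse (i j : Fin n) : Tn n := update id i j

theorem mul_collapse (c : Tn n) (i j : Fin n) : c * collapse i j = update c i (c j) :=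
  comp_update c id i j

theorem isIdempotentElem_collapse {i j : Fin n} (h : i ≠ j) : IsIdempotentElem (collapse i j) := by
  rw [IsIdempotentElem, mul_collapse, collapse, update_of_ne h.symm, id, update_idem]

theorem image_collapse {i j : Fin n} (h : i ≠ j) :
    Finset.univ.image (collapse i j) = Finset.univ.erase i := by
  ext x
  simp only [Finset.mem_image, Finset.mem_univ, true_and, Finset.mem_erase, and_true, collapse]
  constructor
  · rintro ⟨y, rfl⟩
    rcases eq_or_ne y i with rfl | hy
    · simpa using h.symm
    · simp [hy]
  · intro hx
    exact ⟨x, by simp [hx]⟩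

theorem rnk_collapse {i j : Fin n} (h : i ≠ j) : rnk (collapse i j) = n - 1 := by
  rw [rnk, image_collapse h, Finset.card_erase_of_mem (Finset.mem_univ i), Finset.card_univ,
    Fintype.card_fin]

theorem collapse_mem_closure {i j : Fin n} (h : i ≠ j) :
    collapse i j ∈ Subsemigroup.closure (corankOneIdempotents n) :=
  Subsemigroup.subset_closure ⟨isIdempotentElem_collapse h, rnk_collapse h⟩

theorem ofPerm_mul (σ τ : Perm (Fin n)) : ofPerm (σ * τ) = ofPerm σ * ofPerm τ := rfl

theorem ofPerm_swap_mul_collapse {i j y : Fin n} (hj : j ≠ i) :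
    ofPerm (swap i y) * collapse i j = collapse y i * collapse i j := by
  rw [mul_collapse, mul_collapse]
  funext t
  simp only [ofPerm, collapse, update_apply, id, swap_apply_def]
  split_ifs <;> simp_all

theorem ofPerm_swap_mul_collapse_of_ne {i j x y : Fin n} (hj : j ≠ i) (hx : i ≠ x) (hy : i ≠ y) :
    ofPerm (swap x y) * collapse i j =
      collapse i x * collapse x y * collapse y i * collapse i j := by
  rw [mul_collapse, mul_collapse, mul_collapse, mul_collapse]
  funext t
  simp only [ofPerm, collapse, update_apply, id, swap_apply_def]
  split_ifs <;> simp_all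

theorem ofPerm_mul_collapse_mem_closure (σ : Perm (Fin n)) {i j : Fin n} (h : i ≠ j) :
    ofPerm σ * collapse i j ∈ Subsemigroup.closure (corankOneIdempotents n) := by
  induction σ using Perm.swap_induction_on' generalizing i j with
  | one => exact collapse_mem_closure h
  | mul_swap σ x y hxy ih =>
    rw [ofPerm_mul, mul_assoc]
    by_cases hix : i = x
    · subst hix
      rw [ofPerm_swap_mul_collapse h.symm, ← mul_assoc]
      exact mul_mem (ih hxy.symm) (collapse_mem_closure h)
    by_cases hiy : i = y
    · subst hiy
      rw [swap_comm, ofPerm_swap_mul_collapse h.symm, ← mul_assoc]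
      exact mul_mem (ih hxy) (collapse_mem_closure h)
    rw [ofPerm_swap_mul_collapse_of_ne h.symm hix hiy]
    simp only [← mul_assoc]
    exact mul_mem (mul_mem (mul_mem (ih hix) (collapse_mem_closure hxy))
      (collapse_mem_closure (Ne.symm hiy))) (collapse_mem_closure h)

theorem mem_closure_of_not_injective (a : Tn n) (ha : ¬ Injective a) :
    a ∈ Subsemigroup.closure (corankOneIdempotents n) := by
  obtain ⟨i, j, ha_eq, hij⟩ := not_injective_iff.mp ha
  obtain ⟨v, hv⟩ : ∃ v, v ∉ Set.range a :=
    not_forall.mp (mt Finite.injective_iff_surjective.mpr ha)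
  let c : Tn n := update a i v
  have hc_mul : c * collapse i j = a := update_comp_update_id a hij ha_eq v
  rw [← hc_mul]
  by_cases hc : Injective c
  · exact ofPerm_mul_collapse_mem_closure (.ofBijective c (Finite.injective_iff_bijective.mp hc)) hij
  · exact mul_mem (mem_closure_of_not_injective c hc) (collapse_mem_closure hij)
termination_by (Set.range a)ᶜ.ncard
decreasing_by
  exact Set.ncard_lt_ncard (compl_lt_compl_iff_lt.mpr
    (range_ssubset_range_update hij ha_eq hv)) (Set.toFinite _)

end Tn

/-- Every singular transformation is a product of idempotents of rank `n - 1`. -/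
theorem stmt7 (n : ℕ) (a : Tn n) (ha : ¬ Function.Bijective a) :
    ∃ L : List (Tn n), L ≠ [] ∧ (∀ e ∈ L, e * e = e ∧ rnk e = n - 1) ∧ a = L.prod :=
  Subsemigroup.exists_list_prod_of_mem_closure
    (Tn.mem_closure_of_not_injective a fun h => ha (Finite.injective_iff_bijective.mp h))
end

section
/- Let f be an idempotent transformation of {1,...,n} of rank k whose kernel has exactly one non-singleton class, which has size 2. For any singular transformation a of rank k and any transposition (x y), we have a∘(x y) = a∘b where b is the identity or a product of three conjugates of f by permutations. -/
section Collapse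

variable {α : Type*} [DecidableEq α]

def collapse (p q : α) : Function.End α := fun t => if t = p then q else t

@[simp]
lemma collapse_apply_self (p q : α) : collapse p q p = q := if_pos rfl

lemma collapse_apply_of_ne {p t : α} (q : α) (h : t ≠ p) : collapse p q t = t := if_neg h

lemma collapse_mul_self (p q : α) : collapse p q * collapse p q = collapse p q := by
  funext t
  show collapse p q (collapse p q t) = collapse p q t
  by_cases h : t = p <;> simp [collapse, h]

lemma eq_collapse_of_forall_apply_ne {f : Function.End α} {p : α}
    (hp : ∀ t, f t ≠ t → t = p) : f = collapse p (f p) := by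
  funext t
  by_cases htp : t = p
  · subst htp
    simp
  · rw [collapse_apply_of_ne _ htp]
    by_contra ht
    exact htp (hp t ht)

lemma exists_eq_collapse_of_idempotent {f : Function.End α} (hf : f * f = f) {u v : α}
    (huv : u ≠ v) (hker : f u = f v)
    (honly : ∀ w z : α, w ≠ z → f w = f z → ({w, z} : Set α) = {u, v}) :
    ∃ p q, p ≠ q ∧ f = collapse p q := by
  have hfix : ∀ t, f (f t) = f t := fun t => congrFun hf t
  obtain ⟨p, hp⟩ : ∃ p, f p ≠ p := by
    by_contra! h
    exact huv (by rw [← h u, hker, h v])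
  have hpair : ({f p, p} : Set α) = {u, v} := honly _ _ hp (hfix p)
  refine ⟨p, f p, hp.symm, eq_collapse_of_forall_apply_ne fun t ht => ?_⟩
  have ht' : t ∈ ({f p, p} : Set α) := by
    rw [hpair, ← honly _ _ ht (hfix t)]
    exact Set.mem_insert_of_mem _ rfl
  rcases ht' with rfl | rfl
  · exact absurd (hfix p) ht
  · rfl

lemma swap_apply_eq_collapse {x y w : α} (hw : w ≠ x) :
    Equiv.swap x y w = collapse y x w := by
  by_cases hwy : w = y
  · subst hwy
    simp
  · rw [Equiv.swap_apply_of_ne_of_ne hw hwy, collapse_apply_of_ne _ hwy]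

lemma swap_apply_eq_collapse_mul_collapse_mul_collapse {x y z w : α} (hzx : z ≠ x) (hzy : z ≠ y)
    (hw : w ≠ z) : Equiv.swap x y w = (collapse z y * collapse y x * collapse x z) w := by
  show Equiv.swap x y w = collapse z y (collapse y x (collapse x z w))
  by_cases hwx : w = x
  · subst hwx
    simp [collapse, hzy]
  · by_cases hwy : w = y
    · subst hwy
      simp [collapse, hwx, Ne.symm hzx]
    · simp [collapse, hwx, hwy, hw, Equiv.swap_apply_of_ne_of_ne hwx hwy]

lemma exists_perm_apply_eq_apply_eq {p q p' q' : α} (hpq : p ≠ q) (hpq' : p' ≠ q') :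
    ∃ g : Equiv.Perm α, g p = p' ∧ g q = q' := by
  refine ⟨(Equiv.swap p p').trans (Equiv.swap (Equiv.swap p p' q) q'), ?_, by simp⟩
  have hq : Equiv.swap p p' q ≠ p' := by
    rw [Ne, Equiv.swap_apply_eq_iff, Equiv.swap_apply_right]
    exact hpq.symm
  rw [Equiv.trans_apply, Equiv.swap_apply_left]
  exact Equiv.swap_apply_of_ne_of_ne hq.symm hpq'

end Collapse

lemma ofPerm_inv_mul_collapse_mul_ofPerm {n : ℕ} (g : Equiv.Perm (Fin n)) (p q : Fin n) :
    ofPerm g⁻¹ * collapse p q * ofPerm g = collapse (g⁻¹ p) (g⁻¹ q) := by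
  funext t
  show g⁻¹ (collapse p q (g t)) = collapse (g⁻¹ p) (g⁻¹ q) t
  by_cases h : g t = p
  · rw [h, collapse_apply_self, Equiv.Perm.eq_inv_iff_eq.mpr h, collapse_apply_self]
  · rw [collapse_apply_of_ne _ h, collapse_apply_of_ne _ (mt Equiv.Perm.eq_inv_iff_eq.mp h)]
    exact g.symm_apply_apply t

lemma collapse_mem_conjClass {n : ℕ} {p q p' q' : Fin n} (hpq : p ≠ q) (hpq' : p' ≠ q') :
    collapse p q ∈ conjClass (collapse p' q') := by
  obtain ⟨g, rfl, rfl⟩ := exists_perm_apply_eq_apply_eq hpq hpq'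
  exact ⟨g, by simp [ofPerm_inv_mul_collapse_mul_ofPerm]⟩

theorem stmt8_general (n : ℕ) (f : Tn n) (hf : f * f = f)
    (u v : Fin n) (huv : u ≠ v) (hker : f u = f v)
    (honly : ∀ w z : Fin n, w ≠ z → f w = f z → ({w, z} : Set (Fin n)) = {u, v})
    (a : Tn n) (ha : ¬ Function.Bijective a)
    (x y : Fin n) (hxy : x ≠ y) :
    ∃ b : Tn n, ofPerm (Equiv.swap x y) * a = b * a ∧
      (b = 1 ∨ ∃ e₁ e₂ e₃ : Tn n, e₁ ∈ conjClass f ∧ e₂ ∈ conjClass f ∧ e₃ ∈ conjClass f ∧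
        b = e₃ * e₂ * e₁) := by
  obtain ⟨p, q, hpq, rfl⟩ := exists_eq_collapse_of_idempotent hf huv hker honly
  have hconj {s t : Fin n} (hst : s ≠ t) : collapse s t ∈ conjClass (collapse p q) :=
    collapse_mem_conjClass hst hpq
  have hcube (s t : Fin n) : collapse s t = collapse s t * collapse s t * collapse s t := by
    rw [collapse_mul_self, collapse_mul_self]
  obtain ⟨z, hz⟩ : ∃ z, ∀ t, a t ≠ z := by
    by_contra! h
    exact ha (Finite.surjective_iff_bijective.mp h)
  have hswap (b : Tn n) (hb : ∀ w, w ≠ z → Equiv.swap x y w = b w) :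
      ofPerm (Equiv.swap x y) * a = b * a :=
    funext fun t => hb _ (hz t)
  rcases eq_or_ne z x with rfl | hzx
  · exact ⟨collapse y z, hswap _ fun w hw => swap_apply_eq_collapse hw,
      Or.inr ⟨_, _, _, hconj hxy.symm, hconj hxy.symm, hconj hxy.symm, hcube _ _⟩⟩
  rcases eq_or_ne z y with rfl | hzy
  · exact ⟨collapse x z, hswap _ fun w hw => Equiv.swap_comm x z ▸ swap_apply_eq_collapse hw,
      Or.inr ⟨_, _, _, hconj hxy, hconj hxy, hconj hxy, hcube _ _⟩⟩
  exact ⟨collapse z y * collapse y x * collapse x z,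
    hswap _ fun w hw => swap_apply_eq_collapse_mul_collapse_mul_collapse hzx hzy hw,
    Or.inr ⟨_, _, _, hconj hzx.symm, hconj hxy.symm, hconj hzy, rfl⟩⟩

/-- If `f` is an idempotent of rank `k` whose kernel has exactly one non-singleton class,
of size 2, then `a∘(x y) = a∘b` with `b` the identity or a product of three conjugates of `f`. -/
theorem stmt8 (n k : ℕ) (f : Tn n) (hf : f * f = f) (hfk : rnk f = k)
    (u v : Fin n) (huv : u ≠ v) (hker : f u = f v)
    (honly : ∀ w z : Fin n, w ≠ z → f w = f z → ({w, z} : Set (Fin n)) = {u, v})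
    (a : Tn n) (ha : ¬ Function.Bijective a) (hak : rnk a = k)
    (x y : Fin n) (hxy : x ≠ y) :
    ∃ b : Tn n, ofPerm (Equiv.swap x y) * a = b * a ∧
      (b = 1 ∨ ∃ e₁ e₂ e₃ : Tn n, e₁ ∈ conjClass f ∧ e₂ ∈ conjClass f ∧ e₃ ∈ conjClass f ∧
        b = e₃ * e₂ * e₁) :=
  stmt8_general n f hf u v huv hker honly a ha x y hxy
end

section
/- Let e be an idempotent transformation, g a permutation of {1,...,n} with e∘g singular, and f an idempotent with rank(f) = rank(e∘g). Then e∘g lies in e·⟨C_f⟩, the set of products of e with elements of the subsemigroup generated by the S_n-conjugates of f. In particular, e∘g ∈ ⟨C_e⟩. -/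
/-!
A conjugate `σ⁻¹ f σ` of an idempotent `f` is a retraction onto `σ⁻¹ (im f)`, and `σ` can be
chosen to carry any set `S` with `#S = rnk f` onto `im f`. Conjugating such a retraction onto
`S - u + v` by a transposition gives a conjugate of `f` that acts on `S` as `swap u v`
(`u ∈ S`, `v ∉ S`); when `rnk f < n` three of these make up any transposition on `S`, so every
permutation agrees on `S` with a product of conjugates of `f`. For `S = im e` this yields
`g ∘ e = c ∘ e`, and `c ∘ e ∈ ⟨C_e⟩` once `f = e`.
-/

open Finset Equiv
open scoped Pointwise

theorem Equiv.Perm.exists_smul_finset_eq {α : Type*} [DecidableEq α] {s t : Finset α}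
    (h : #s = #t) : ∃ σ : Perm α, σ • s = t := by
  have := Set.powersetCard.isPretransitive (α := α) (n := #t)
  obtain ⟨σ, hσ⟩ := MulAction.exists_smul_eq (Perm α)
    (⟨s, h⟩ : Set.powersetCard α #t) ⟨t, rfl⟩
  exact ⟨σ, congrArg Subtype.val hσ⟩

variable {n : ℕ}

theorem ofPerm_conj_apply (f : Tn n) (σ : Perm (Fin n)) (x : Fin n) :
    (ofPerm σ⁻¹ * f * ofPerm σ) x = σ⁻¹ (f (σ x)) := rfl

theorem conj_mem_conjClass {f c : Tn n} (hc : c ∈ conjClass f) (π : Perm (Fin n)) :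
    ofPerm π⁻¹ * c * ofPerm π ∈ conjClass f := by
  obtain ⟨σ, rfl⟩ := hc
  exact ⟨σ * π, by simp only [mul_inv_rev]; rfl⟩

theorem idem_apply_of_mem_image {f : Tn n} (hf : f * f = f) {b : Fin n}
    (hb : b ∈ univ.image f) : f b = b := by
  obtain ⟨x, -, rfl⟩ := mem_image.1 hb
  exact congrFun hf x

theorem exists_conjClass_retraction {f : Tn n} (hf : f * f = f) {S : Finset (Fin n)}
    (hS : #S = rnk f) : ∃ c ∈ conjClass f, (∀ x, c x ∈ S) ∧ ∀ x ∈ S, c x = x := by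
  obtain ⟨σ, hσ⟩ := Perm.exists_smul_finset_eq hS
  refine ⟨ofPerm σ⁻¹ * f * ofPerm σ, ⟨σ, rfl⟩, fun x => ?_, fun x hx => ?_⟩
  · rw [ofPerm_conj_apply, ← Perm.smul_def, Finset.inv_smul_mem_iff, hσ]
    exact mem_image_of_mem f (mem_univ _)
  · have : σ x ∈ univ.image f := hσ ▸ smul_mem_smul_finset hx
    rw [ofPerm_conj_apply, idem_apply_of_mem_image hf this]
    exact σ.symm_apply_apply x

def IsRealizedOn (f : Tn n) (S : Finset (Fin n)) (σ : Perm (Fin n)) : Prop :=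
  ∃ c ∈ Subsemigroup.closure (conjClass f), ∀ x ∈ S, c x = σ x

namespace IsRealizedOn

variable {f : Tn n} {S : Finset (Fin n)} {σ τ : Perm (Fin n)}

theorem congr (h : IsRealizedOn f S σ) (hστ : ∀ x ∈ S, σ x = τ x) : IsRealizedOn f S τ := by
  obtain ⟨c, hc, hcσ⟩ := h
  exact ⟨c, hc, fun x hx => (hcσ x hx).trans (hστ x hx)⟩

theorem mul (hτ : IsRealizedOn f (σ • S) τ) (hσ : IsRealizedOn f S σ) :
    IsRealizedOn f S (τ * σ) := by
  obtain ⟨c, hc, hcτ⟩ := hτ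
  obtain ⟨d, hd, hdσ⟩ := hσ
  refine ⟨c * d, mul_mem hc hd, fun x hx => ?_⟩
  change c (d x) = τ (σ x)
  rw [hdσ x hx]
  exact hcτ _ (smul_mem_smul_finset hx)

end IsRealizedOn

theorem isRealizedOn_one {f : Tn n} (hf : f * f = f) {S : Finset (Fin n)} (hS : #S = rnk f) :
    IsRealizedOn f S 1 := by
  obtain ⟨c, hc, -, hcS⟩ := exists_conjClass_retraction hf hS
  exact ⟨c, Subsemigroup.subset_closure hc, hcS⟩

theorem isRealizedOn_swap_of_mem_of_notMem {f : Tn n} (hf : f * f = f) {S : Finset (Fin n)}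
    (hS : #S = rnk f) {u v : Fin n} (hu : u ∈ S) (hv : v ∉ S) :
    IsRealizedOn f S (swap u v) := by
  have hvu : v ≠ u := fun h => hv (h ▸ hu)
  obtain ⟨c, hc, hcS, hcfix⟩ := exists_conjClass_retraction hf (S := insert v (S.erase u))
    (by rw [card_insert_of_notMem (fun h => hv (mem_of_mem_erase h)), card_erase_of_mem hu,
      Nat.sub_add_cancel (card_pos.2 ⟨u, hu⟩), hS])
  have hcu : c u ≠ u := fun h => by simpa [h, hvu.symm] using hcS u
  -- `c u` and `v` both lie in the set `c` retracts onto, so this conjugate still fixes `S - u`.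
  refine ⟨ofPerm (swap (c u) v)⁻¹ * c * ofPerm (swap (c u) v),
    Subsemigroup.subset_closure (conj_mem_conjClass hc _), fun x hx => ?_⟩
  rw [ofPerm_conj_apply, swap_inv]
  by_cases hxu : x = u
  · rw [hxu, swap_apply_of_ne_of_ne hcu.symm hvu.symm, swap_apply_left, swap_apply_left]
  have hxv : x ≠ v := fun h => hv (h ▸ hx)
  rw [swap_apply_of_ne_of_ne hxu hxv]
  by_cases hxc : x = c u
  · rw [hxc, swap_apply_left, hcfix v (mem_insert_self v _), swap_apply_right]
  · rw [swap_apply_of_ne_of_ne hxc hxv, hcfix x (mem_insert_of_mem (mem_erase.2 ⟨hxu, hx⟩)),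
      swap_apply_of_ne_of_ne hxc hxv]

theorem mem_swap_smul_finset {S : Finset (Fin n)} {a b x : Fin n} :
    x ∈ swap a b • S ↔ swap a b x ∈ S := by
  rw [← Finset.inv_smul_mem_iff, swap_inv, Perm.smul_def]

theorem isRealizedOn_swap {f : Tn n} (hf : f * f = f) {S : Finset (Fin n)}
    (hS : #S = rnk f) (hlt : rnk f < n) (u v : Fin n) : IsRealizedOn f S (swap u v) := by
  by_cases hu : u ∈ S <;> by_cases hv : v ∈ S
  · obtain ⟨w, -, hw⟩ := exists_mem_notMem_of_card_lt_card (s := S) (t := univ)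
      (by rwa [hS, card_univ, Fintype.card_fin])
    by_cases huv : u = v
    · exact (isRealizedOn_one hf hS).congr fun x _ => by rw [huv, swap_self]; rfl
    have huw : u ≠ w := ne_of_mem_of_not_mem hu hw
    have hvw : v ≠ w := ne_of_mem_of_not_mem hv hw
    -- each factor swaps a point of the current image of `S` with a point outside it
    have hdecomp : swap u v = swap w v * (swap v u * swap u w) := by
      ext x; simp only [Perm.mul_apply, swap_apply_def]; split_ifs <;> simp_all
    rw [hdecomp]
    refine .mul ?_ (.mul ?_ (isRealizedOn_swap_of_mem_of_notMem hf hS hu hw))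
    all_goals
      refine isRealizedOn_swap_of_mem_of_notMem hf (by simp only [card_smul_finset, hS]) ?_ ?_
      all_goals simp [mem_swap_smul_finset, mul_smul, swap_apply_def, *, Ne.symm huv,
        Ne.symm huw, Ne.symm hvw]
  · exact isRealizedOn_swap_of_mem_of_notMem hf hS hu hv
  · exact swap_comm v u ▸ isRealizedOn_swap_of_mem_of_notMem hf hS hv hu
  · exact (isRealizedOn_one hf hS).congr fun x hx => (swap_apply_of_ne_of_ne
      (ne_of_mem_of_not_mem hx hu) (ne_of_mem_of_not_mem hx hv)).symm

theorem isRealizedOn {f : Tn n} (hf : f * f = f) {S : Finset (Fin n)}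
    (hS : #S = rnk f) (hlt : rnk f < n) (σ : Perm (Fin n)) : IsRealizedOn f S σ := by
  induction σ using Perm.swap_induction_on generalizing S with
  | one => exact isRealizedOn_one hf hS
  | swap_mul σ u v _ ih =>
    exact (isRealizedOn_swap hf (by rw [card_smul_finset, hS]) hlt u v).mul (ih hS)

theorem rnk_ofPerm_mul (g : Perm (Fin n)) (e : Tn n) : rnk (ofPerm g * e) = rnk e := by
  change #(univ.image (g ∘ e)) = #(univ.image e)
  rw [← image_image (s := univ) (f := (e : Fin n → Fin n)), card_image_of_injective _ g.injective]

theorem rnk_lt_of_not_bijective {a : Tn n} (ha : ¬ Function.Bijective a) : rnk a < n := by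
  refine lt_of_le_of_ne ((card_le_univ _).trans_eq (Fintype.card_fin n)) fun h => ha ?_
  have hinj : Set.InjOn (a : Fin n → Fin n) (univ : Finset (Fin n)) :=
    card_image_iff.1 (by rwa [card_univ, Fintype.card_fin])
  exact Finite.injective_iff_bijective.1 (Set.injOn_univ.1 (by simpa using hinj))

theorem exists_mem_closure_conjClass_ofPerm_mul_eq {e f : Tn n} (hf : f * f = f)
    (hr : rnk f = rnk e) (hlt : rnk e < n) (g : Perm (Fin n)) :
    ∃ c ∈ Subsemigroup.closure (conjClass f), ofPerm g * e = c * e := by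
  obtain ⟨c, hc, hcg⟩ := isRealizedOn hf (S := univ.image e) hr.symm (hr ▸ hlt) g
  exact ⟨c, hc, funext fun x => (hcg (e x) (mem_image_of_mem e (mem_univ x))).symm⟩

/-- If `e` is idempotent, `e∘g` is singular and `f` is an idempotent of the same rank,
then `e∘g ∈ e⟨C_f⟩`; in particular `e∘g ∈ ⟨C_e⟩`. -/
theorem stmt9 (n : ℕ) (e : Tn n) (he : e * e = e) (g : Equiv.Perm (Fin n))
    (ha : ¬ Function.Bijective (ofPerm g * e))
    (f : Tn n) (hf : f * f = f) (hr : rnk f = rnk (ofPerm g * e)) :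
    (∃ c ∈ Subsemigroup.closure (conjClass f), ofPerm g * e = c * e) ∧
    ofPerm g * e ∈ Subsemigroup.closure (conjClass e) := by
  have hlt : rnk e < n := rnk_ofPerm_mul g e ▸ rnk_lt_of_not_bijective ha
  rw [rnk_ofPerm_mul] at hr
  refine ⟨exists_mem_closure_conjClass_ofPerm_mul_eq hf hr hlt g, ?_⟩
  obtain ⟨c, hc, hce⟩ := exists_mem_closure_conjClass_ofPerm_mul_eq he rfl hlt g
  rw [hce]
  exact mul_mem hc (Subsemigroup.subset_closure ⟨1, rfl⟩)
end

section
/- For any idempotent singular transformation e of {1,...,n}, the subsemigroup generated by the S_n-conjugacy class C_e = {g⁻¹eg : g ∈ S_n} equals e^{S_n}, the set of non-invertible elements of the subsemigroup generated by {e} ∪ S_n. -/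
/-!
Let `S = ⟨C_e⟩` and let `Y` be the image of `e`, i.e. its set of fixed points. The crux is
`e * g ∈ S` for every permutation `g`, which follows once some `F ∈ S` satisfies
`F * g⁻¹ * e = e`, since then `e * g = F * (g⁻¹ * e * g)`. The permutations `g` admitting such
an `F` contain `1` and are closed under right multiplication by a transposition `(a b)`.
If `a ∈ Y` and `b ∉ Y`, the conjugate `c` of `e` by `(a (e b))` fixes `Y` pointwise and sends
`b` to `a`, so `c * (a b) * e = e` and `F * g c g⁻¹` works for `g (a b)`; if `a, b ∉ Y` then
`(a b) * e = e`; and if `a, b ∈ Y`, write `(a b) = (a w) (b w) (a w)` with `w ∉ Y`.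
Hence `S` is closed under multiplication by permutations on both sides, so `S_n ∪ S` is a
subsemigroup containing `{e} ∪ S_n`. Conversely no element of `S` is surjective, because `e`
is not.
-/

open Subsemigroup Equiv

variable {n : ℕ} {e : Tn n}

lemma ofPerm_mul (g h : Perm (Fin n)) : ofPerm (g * h) = ofPerm g * ofPerm h := rfl

lemma ofPerm_one : ofPerm (1 : Perm (Fin n)) = 1 := rfl

lemma ofPerm_inv_mul_cancel_left (g : Perm (Fin n)) (a : Tn n) :
    ofPerm g⁻¹ * (ofPerm g * a) = a :=
  funext fun x => g.symm_apply_apply (a x)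

lemma ofPerm_mem_perms (g : Perm (Fin n)) : ofPerm g ∈ perms n := ⟨g, rfl⟩

lemma self_mem_conjClass (e : Tn n) : e ∈ conjClass e :=
  ⟨1, by rw [inv_one, ofPerm_one, one_mul, mul_one]⟩

lemma conj_mem_closure_conjClass {F : Tn n} (hF : F ∈ closure (conjClass e))
    (g : Perm (Fin n)) : ofPerm g⁻¹ * F * ofPerm g ∈ closure (conjClass e) := by
  induction hF using closure_induction with
  | mem c hc =>
    obtain ⟨h, rfl⟩ := hc
    refine subset_closure ⟨h * g, ?_⟩
    simp only [mul_inv_rev, ofPerm_mul, mul_assoc]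
  | mul a b _ _ iha ihb =>
    convert mul_mem iha ihb using 1
    simp only [mul_assoc, ← mul_assoc (ofPerm g), ← ofPerm_mul, mul_inv_cancel,
      ofPerm_one, one_mul]

lemma apply_swap_apply_of_fixed {a c y : Fin n} (ha : e a = a) (hc : e c = c) (hy : e y = y) :
    e (swap a c y) = swap a c y := by
  rw [swap_apply_def]
  split_ifs <;> assumption

lemma exists_not_fixed (hs : ¬ Function.Bijective e) : ∃ w, e w ≠ w := by
  by_contra! h
  exact hs (by rw [show e = id from funext h]; exact Function.bijective_id)

lemma conj_swap_mul_swap_mul_self (he : e * e = e) {a b : Fin n} (ha : e a = a) (hb : e b ≠ b) :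
    ofPerm (swap a (e b))⁻¹ * e * ofPerm (swap a (e b)) * ofPerm (swap a b) * e = e := by
  have heb : e (e b) = e b := congrFun he b
  rw [swap_inv]
  funext x
  have hx : e (e x) = e x := congrFun he x
  change swap a (e b) (e (swap a (e b) (swap a b (e x)))) = e x
  by_cases hxa : e x = a
  · have hba : b ≠ a := fun h => hb (h ▸ ha)
    rw [hxa, swap_apply_left, swap_apply_of_ne_of_ne hba (Ne.symm hb), swap_apply_right]
  · have hxb : e x ≠ b := fun h => hb (h ▸ hx)
    rw [swap_apply_of_ne_of_ne hxa hxb, apply_swap_apply_of_fixed ha heb hx, swap_apply_self]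

lemma ofPerm_swap_mul_self_of_not_fixed (he : e * e = e) {a b : Fin n} (ha : e a ≠ a)
    (hb : e b ≠ b) : ofPerm (swap a b) * e = e :=
  funext fun x => swap_apply_of_ne_of_ne (fun h => ha (h ▸ congrFun he x))
    (fun h => hb (h ▸ congrFun he x))

def IsUndoable (e : Tn n) (g : Perm (Fin n)) : Prop :=
  ∃ F ∈ closure (conjClass e), F * ofPerm g * e = e

lemma IsUndoable.mul_swap_of_fixed_of_not_fixed (he : e * e = e) {g : Perm (Fin n)}
    (h : IsUndoable e g) {a b : Fin n} (ha : e a = a) (hb : e b ≠ b) :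
    IsUndoable e (g * swap a b) := by
  obtain ⟨F, hF, hFg⟩ := h
  set s := swap a (e b)
  refine ⟨F * (ofPerm (s * g⁻¹)⁻¹ * e * ofPerm (s * g⁻¹)),
    mul_mem hF (subset_closure ⟨_, rfl⟩), ?_⟩
  calc F * (ofPerm (s * g⁻¹)⁻¹ * e * ofPerm (s * g⁻¹)) * ofPerm (g * swap a b) * e
      = F * ofPerm g * (ofPerm s⁻¹ * e * ofPerm s * ofPerm (swap a b) * e) := by
        simp only [mul_inv_rev, inv_inv, ofPerm_mul, mul_assoc, ofPerm_inv_mul_cancel_left]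
    _ = e := by rw [conj_swap_mul_swap_mul_self he ha hb, hFg]

lemma IsUndoable.mul_swap (he : e * e = e) (hs : ¬ Function.Bijective e) {g : Perm (Fin n)}
    (h : IsUndoable e g) {a b : Fin n} (hab : a ≠ b) : IsUndoable e (g * swap a b) := by
  by_cases ha : e a = a <;> by_cases hb : e b = b
  · obtain ⟨w, hw⟩ := exists_not_fixed hs
    have hbw : b ≠ w := fun h => hw (h ▸ hb)
    rw [← swap_mul_swap_mul_swap hbw hab.symm, swap_comm w a, ← mul_assoc, ← mul_assoc]
    exact ((h.mul_swap_of_fixed_of_not_fixed he ha hw).mul_swap_of_fixed_of_not_fixed he hb hw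
      ).mul_swap_of_fixed_of_not_fixed he ha hw
  · exact h.mul_swap_of_fixed_of_not_fixed he ha hb
  · rw [swap_comm]
    exact h.mul_swap_of_fixed_of_not_fixed he hb ha
  · obtain ⟨F, hF, hFg⟩ := h
    refine ⟨F, hF, ?_⟩
    rw [ofPerm_mul, ← mul_assoc F, mul_assoc _ (ofPerm (swap a b)),
      ofPerm_swap_mul_self_of_not_fixed he ha hb, hFg]

lemma isUndoable (he : e * e = e) (hs : ¬ Function.Bijective e) (g : Perm (Fin n)) :
    IsUndoable e g := by
  induction g using Perm.swap_induction_on' with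
  | one => exact ⟨e, subset_closure (self_mem_conjClass e), by rw [ofPerm_one, mul_one, he]⟩
  | mul_swap g a b hab ih => exact ih.mul_swap he hs hab

lemma self_mul_ofPerm_mem_closure (he : e * e = e) (hs : ¬ Function.Bijective e)
    (g : Perm (Fin n)) : e * ofPerm g ∈ closure (conjClass e) := by
  obtain ⟨F, hF, hFg⟩ := isUndoable he hs g⁻¹
  have key : e * ofPerm g = F * (ofPerm g⁻¹ * e * ofPerm g) := by
    conv_lhs => rw [← hFg]
    simp only [mul_assoc]
  rw [key]
  exact mul_mem hF (subset_closure ⟨g, rfl⟩)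

lemma mul_ofPerm_mem_closure (he : e * e = e) (hs : ¬ Function.Bijective e) {F : Tn n}
    (hF : F ∈ closure (conjClass e)) (g : Perm (Fin n)) :
    F * ofPerm g ∈ closure (conjClass e) := by
  induction hF using closure_induction with
  | mem c hc =>
    obtain ⟨h, rfl⟩ := hc
    have key : ofPerm h⁻¹ * e * ofPerm h * ofPerm g =
        ofPerm h⁻¹ * (e * ofPerm (h * g * h⁻¹)) * ofPerm h := by
      simp only [mul_assoc, ← ofPerm_mul, inv_mul_cancel, mul_one]
    rw [key]
    exact conj_mem_closure_conjClass (self_mul_ofPerm_mem_closure he hs _) h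
  | mul a b ha _ _ ihb =>
    rw [mul_assoc]
    exact mul_mem ha ihb

lemma ofPerm_mul_mem_closure (he : e * e = e) (hs : ¬ Function.Bijective e) {F : Tn n}
    (hF : F ∈ closure (conjClass e)) (g : Perm (Fin n)) :
    ofPerm g * F ∈ closure (conjClass e) := by
  have := mul_ofPerm_mem_closure he hs (conj_mem_closure_conjClass hF g⁻¹) g
  rwa [inv_inv, mul_assoc (ofPerm g * F), ← ofPerm_mul, inv_mul_cancel, ofPerm_one, mul_one]
    at this

lemma not_surjective_of_mem_closure (hs : ¬ Function.Bijective e) {F : Tn n}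
    (hF : F ∈ closure (conjClass e)) : ¬ Function.Surjective F := by
  induction hF using closure_induction with
  | mem c hc =>
    obtain ⟨g, rfl⟩ := hc
    intro hsurj
    refine hs (Finite.surjective_iff_bijective.mp ?_)
    exact (Equiv.comp_surjective e g⁻¹).mp (Function.Surjective.of_comp (g := ⇑g) hsurj)
  | mul a b _ _ iha _ =>
    exact fun hsurj => iha (Function.Surjective.of_comp (g := b) hsurj)

lemma closure_conjClass_le : closure (conjClass e) ≤ closure ({e} ∪ perms n) := by
  rw [closure_le]
  rintro c ⟨g, rfl⟩
  exact mul_mem (mul_mem (subset_closure (Or.inr (ofPerm_mem_perms _)))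
    (subset_closure (Or.inl rfl))) (subset_closure (Or.inr (ofPerm_mem_perms _)))

lemma mem_closure_union_perms (he : e * e = e) (hs : ¬ Function.Bijective e) {x : Tn n}
    (hx : x ∈ closure ({e} ∪ perms n)) : x ∈ perms n ∨ x ∈ closure (conjClass e) := by
  induction hx using closure_induction with
  | mem y hy =>
    rcases hy with rfl | hy
    · exact Or.inr (subset_closure (self_mem_conjClass y))
    · exact Or.inl hy
  | mul a b _ _ iha ihb =>
    rcases iha with ⟨g, rfl⟩ | ha <;> rcases ihb with ⟨h, rfl⟩ | hb
    · exact Or.inl (ofPerm_mem_perms (g * h))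
    · exact Or.inr (ofPerm_mul_mem_closure he hs hb g)
    · exact Or.inr (mul_ofPerm_mem_closure he hs ha h)
    · exact Or.inr (mul_mem ha hb)

/-- For a singular idempotent `e`, `⟨C_e⟩ = e^{S_n} = ⟨{e} ∪ S_n⟩ \ S_n`. -/
theorem stmt10 (n : ℕ) (e : Tn n) (he : e * e = e) (hs : ¬ Function.Bijective e) :
    (↑(Subsemigroup.closure (conjClass e)) : Set (Tn n)) =
      ↑(Subsemigroup.closure ({e} ∪ perms n)) \ perms n := by
  ext x
  constructor
  · intro hx
    refine ⟨closure_conjClass_le hx, ?_⟩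
    rintro ⟨g, rfl⟩
    exact not_surjective_of_mem_closure hs hx g.surjective
  · rintro ⟨hx, hxp⟩
    exact (mem_closure_union_perms he hs hx).resolve_left hxp
end

section
/- Let a = e∘g with e a singular idempotent transformation of {1,...,n} and g a permutation. Then e lies in the subsemigroup generated by the conjugates {h⁻¹ah : h ∈ S_n}. -/
/-!
Writing `e = g⁻¹ a` and letting `m` be the order of `g`, the telescoping identity
`(g⁻¹ a)ᵏ gᵏ = (g⁻¹ a g) (g⁻² a g²) ⋯ (g⁻ᵏ a gᵏ)` at `k = m` gives `e = eᵐ` as a product of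
conjugates of `a`. This works for any unit of finite order in any monoid.
-/

section Monoid

variable {M : Type*} [Monoid M] {S : Subsemigroup M} {a : M} {u : Mˣ}

theorem Units.inv_mul_pow_succ_mul_pow_succ_mem
    (hS : ∀ i : ℕ, ↑(u ^ i)⁻¹ * a * ↑(u ^ i) ∈ S) (k : ℕ) :
    (↑u⁻¹ * a) ^ (k + 1) * ↑(u ^ (k + 1)) ∈ S := by
  induction k with
  | zero => simpa using hS 1
  | succ k ih =>
    have hu : (↑(u ^ (k + 1)) : M) * ↑(u ^ (k + 2))⁻¹ = ↑u⁻¹ := by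
      rw [← Units.val_mul]; congr 1; group
    have htelescope : (↑u⁻¹ * a) ^ (k + 2) * ↑(u ^ (k + 2)) =
        ((↑u⁻¹ * a) ^ (k + 1) * ↑(u ^ (k + 1))) * (↑(u ^ (k + 2))⁻¹ * a * ↑(u ^ (k + 2))) := by
      rw [pow_succ _ (k + 1), ← hu]; simp only [mul_assoc]
    rw [htelescope]
    exact S.mul_mem ih (hS _)

theorem Units.inv_mul_pow_mem_of_pow_eq_one
    (hS : ∀ i : ℕ, ↑(u ^ i)⁻¹ * a * ↑(u ^ i) ∈ S) {m : ℕ} (hm : m ≠ 0) (hu : u ^ m = 1) :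
    (↑u⁻¹ * a) ^ m ∈ S := by
  obtain ⟨k, rfl⟩ := Nat.exists_eq_add_one_of_ne_zero hm
  simpa [hu] using Units.inv_mul_pow_succ_mul_pow_succ_mem hS k

theorem IsIdempotentElem.mem_of_conj_mem {e : M} (he : IsIdempotentElem e) (hea : ↑u⁻¹ * a = e)
    (hS : ∀ i : ℕ, ↑(u ^ i)⁻¹ * a * ↑(u ^ i) ∈ S) {m : ℕ} (hm : m ≠ 0) (hu : u ^ m = 1) :
    e ∈ S := by
  rw [← he.pow_eq hm, ← hea]
  exact Units.inv_mul_pow_mem_of_pow_eq_one hS hm hu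

end Monoid

theorem stmt14_general (n : ℕ) (e : Tn n) (he : e * e = e)
    (g : Equiv.Perm (Fin n)) (a : Tn n) (hag : a = ofPerm g * e) :
    e ∈ Subsemigroup.closure (conjClass a) := by
  set u := Equiv.Perm.equivUnitsEnd g
  have hea : ↑u⁻¹ * a = e := by
    rw [hag, ← mul_assoc]
    exact congrArg (· * e) u.inv_mul
  have hS : ∀ i : ℕ, ↑(u ^ i)⁻¹ * a * ↑(u ^ i) ∈ Subsemigroup.closure (conjClass a) :=
    fun i => Subsemigroup.subset_closure ⟨g ^ i, by rw [← map_pow]; rfl⟩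
  have hu : u ^ orderOf g = 1 := by
    rw [← map_pow, pow_orderOf_eq_one, map_one]
  exact IsIdempotentElem.mem_of_conj_mem he hea hS (orderOf_pos g).ne' hu

/-- If `a = e∘g` with `e` a singular idempotent and `g` a permutation, then `e` lies in the
semigroup generated by the `S_n`-conjugates of `a`. -/
theorem stmt14 (n : ℕ) (e : Tn n) (he : e * e = e) (hs : ¬ Function.Bijective e)
    (g : Equiv.Perm (Fin n)) (a : Tn n) (hag : a = ofPerm g * e) :
    e ∈ Subsemigroup.closure (conjClass a) :=
  stmt14_general n e he g a hag
end

section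
/- If e is a singular idempotent transformation of {1,...,n} and h, g ∈ S_n, then the product h∘e∘g lies in the subsemigroup of T_n generated by the S_n-conjugates of e. -/
/-! Write `h e g = c * (g⁻¹ e g)`, where `c` is any product of conjugates of `e` that agrees
with the permutation `h g` on `g⁻¹ (Fix e)`: as `e` is idempotent, `g⁻¹ (Fix e)` contains the
image of `g⁻¹ e g`. So it suffices that on every set `s` with `|s| = |Fix e|` every permutation
is matched by such a product. This property is closed under composition, so only transpositions
`(a b)` are needed. A conjugate `σ⁻¹ e σ` is the identity on `σ⁻¹ (Fix e)`; if `σ` maps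
`s \ {a}` into `Fix e \ {e u}`, `a` to a point `u` with `e u ≠ u`, and `b` to `e u`, the
conjugate is the identity on `s \ {a}` and sends `a` to `b`. This handles `a ∈ s`, `b ∉ s`; a
transposition inside `s` is routed through a point outside `s`, which exists as `e ≠ id`. -/

open Finset Equiv

theorem Equiv.Perm.exists_mapsTo_and_apply_eq {α : Type*} [Finite α] {s t : Finset α}
    (hst : s.card = t.card) {a b u w : α} (has : a ∉ s) (hbs : b ∉ s) (hab : a ≠ b)
    (hut : u ∉ t) (hwt : w ∉ t) (huw : u ≠ w) :
    ∃ σ : Perm α, Set.MapsTo σ s t ∧ σ a = u ∧ σ b = w := by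
  let ε := s.equivOfCardEq hst
  let f : Option (Option s) → α := fun i => i.elim b fun j => j.elim a Subtype.val
  let g : Option (Option s) → α := fun i => i.elim w fun j => j.elim u fun x => ε x
  have hf : Function.Injective f := by
    rintro (_ | _ | ⟨x, hx⟩) (_ | _ | ⟨y, hy⟩) h <;> simp_all [f] <;> grind
  have hg : Function.Injective g := by
    rintro (_ | _ | x) (_ | _ | y) h <;> simp_all [g] <;> grind
  obtain ⟨σ, hσ⟩ := Perm.exists_extending_pair f g hf hg
  refine ⟨σ, fun z hz => ?_, hσ (some none), hσ none⟩
  simpa [f, g] using hσ (some (some ⟨z, hz⟩)) ▸ (ε ⟨z, hz⟩).2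

def fixedPts {α : Type*} [Fintype α] [DecidableEq α] (f : α → α) : Finset α :=
  {z | f z = z}

lemma mem_fixedPts {α : Type*} [Fintype α] [DecidableEq α] {f : α → α} {z : α} :
    z ∈ fixedPts f ↔ f z = z := by
  simp [fixedPts]

section Realizable

variable {n : ℕ}

def RealizableOn (e : Tn n) (s : Finset (Fin n)) (φ : Fin n → Fin n) : Prop :=
  ∃ c ∈ Subsemigroup.closure (conjClass e), Set.EqOn c φ s

variable {e : Tn n}

lemma RealizableOn.comp {s : Finset (Fin n)} {φ ψ : Fin n → Fin n}
    (hφ : RealizableOn e (s.image ψ) φ) (hψ : RealizableOn e s ψ) :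
    RealizableOn e s (φ ∘ ψ) := by
  obtain ⟨c, hc, hcφ⟩ := hφ
  obtain ⟨d, hd, hdψ⟩ := hψ
  refine ⟨c * d, mul_mem hc hd, fun z hz => ?_⟩
  show c (d z) = φ (ψ z)
  rw [hdψ hz]
  exact hcφ (mem_coe.2 (mem_image_of_mem ψ hz))

lemma RealizableOn.congr {s : Finset (Fin n)} {φ ψ : Fin n → Fin n}
    (hφ : RealizableOn e s φ) (h : Set.EqOn φ ψ s) : RealizableOn e s ψ := by
  obtain ⟨c, hc, hcφ⟩ := hφ
  exact ⟨c, hc, hcφ.trans h⟩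

lemma conj_ofPerm_apply (σ : Perm (Fin n)) (z : Fin n) :
    (ofPerm σ⁻¹ * e * ofPerm σ) z = σ⁻¹ (e (σ z)) := rfl

lemma conj_ofPerm_apply_of_fixed (σ : Perm (Fin n)) {z : Fin n} (hz : e (σ z) = σ z) :
    (ofPerm σ⁻¹ * e * ofPerm σ) z = z := by
  rw [conj_ofPerm_apply, hz]
  exact σ.symm_apply_apply z

lemma realizableOn_id {s : Finset (Fin n)} (hs : s.card = (fixedPts e).card) :
    RealizableOn e s id := by
  obtain ⟨σ, hσ⟩ := Perm.exists_map_finset_eq s (fixedPts e) hs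
  exact ⟨_, Subsemigroup.subset_closure ⟨σ, rfl⟩, fun z hz =>
    conj_ofPerm_apply_of_fixed σ (mem_fixedPts.1 (hσ ▸ mem_map_of_mem _ hz))⟩

variable {u : Fin n} (hu : e u ≠ u) (hfix : e (e u) = e u)
include hu hfix

lemma realizableOn_swap_of_mem_of_notMem {s : Finset (Fin n)} (hs : s.card = (fixedPts e).card)
    {a b : Fin n} (ha : a ∈ s) (hb : b ∉ s) : RealizableOn e s (swap a b) := by
  have hfix' : e u ∈ fixedPts e := mem_fixedPts.2 hfix
  have hu' : u ∉ fixedPts e := mt mem_fixedPts.1 hu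
  obtain ⟨σ, hσs, hσa, hσb⟩ := Perm.exists_mapsTo_and_apply_eq
    (s := s.erase a) (t := (fixedPts e).erase (e u))
    (by rw [card_erase_of_mem ha, card_erase_of_mem hfix', hs]) (notMem_erase a s)
    (fun h => hb (mem_of_mem_erase h)) (ne_of_mem_of_not_mem ha hb)
    (fun h => hu' (mem_of_mem_erase h)) (notMem_erase _ _) hu.symm
  refine ⟨_, Subsemigroup.subset_closure ⟨σ, rfl⟩, fun z hz => ?_⟩
  by_cases hza : z = a
  · subst hza
    rw [conj_ofPerm_apply, hσa, swap_apply_left, ← hσb]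
    exact σ.symm_apply_apply b
  · have hσz := mem_of_mem_erase (hσs (mem_erase.2 ⟨hza, hz⟩))
    rw [conj_ofPerm_apply_of_fixed σ (mem_fixedPts.1 hσz),
      swap_apply_of_ne_of_ne hza (ne_of_mem_of_not_mem hz hb)]

lemma realizableOn_swap {s : Finset (Fin n)} (hs : s.card = (fixedPts e).card) (a b : Fin n) :
    RealizableOn e s (swap a b) := by
  have move : ∀ {t : Finset (Fin n)} {x y : Fin n}, t.card = (fixedPts e).card → x ∈ t →
      y ∉ t → RealizableOn e t (swap x y) :=
    fun ht hx hy => realizableOn_swap_of_mem_of_notMem hu hfix ht hx hy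
  by_cases ha : a ∈ s <;> by_cases hb : b ∈ s
  · by_cases hab : a = b
    · subst hab
      exact (realizableOn_id hs).congr fun z _ => by simp
    obtain ⟨c, -, hc⟩ := exists_mem_notMem_of_card_lt_card (s := s) (t := univ)
      (by rw [hs, card_univ]; exact card_lt_univ_of_notMem (mt mem_fixedPts.1 hu))
    have hac : a ≠ c := ne_of_mem_of_not_mem ha hc
    have hbc : b ≠ c := ne_of_mem_of_not_mem hb hc
    -- move `a` out to the free point `c`, then `b` to `a`, then `c` back to `b`
    have h₁ := move hs ha hc
    have h₂ := move (t := s.image (swap a c)) (x := b) (y := a)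
      (by rw [card_image_of_injective _ (swap a c).injective, hs])
      (by simp [swap_apply_eq_iff, swap_apply_of_ne_of_ne (Ne.symm hab) hbc, hb])
      (by simp [swap_apply_eq_iff, hc])
    have h₃ := move (t := (s.image (swap a c)).image (swap b a)) (x := c) (y := b)
      (by rw [card_image_of_injective _ (swap b a).injective,
        card_image_of_injective _ (swap a c).injective, hs])
      (by simp [swap_apply_eq_iff, swap_apply_of_ne_of_ne hbc.symm hac.symm, ha])
      (by simp [swap_apply_eq_iff, hc])
    refine ((h₃.comp h₂).comp h₁).congr fun z _ => ?_
    simp only [Function.comp_apply, swap_apply_def]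
    split_ifs <;> grind
  · exact move hs ha hb
  · exact (swap_comm a b ▸ move hs hb ha)
  · exact (realizableOn_id hs).congr fun z hz =>
      (swap_apply_of_ne_of_ne (ne_of_mem_of_not_mem hz ha) (ne_of_mem_of_not_mem hz hb)).symm

lemma realizableOn_perm (σ : Perm (Fin n)) {s : Finset (Fin n)}
    (hs : s.card = (fixedPts e).card) : RealizableOn e s σ := by
  induction σ using Perm.swap_induction_on' generalizing s with
  | one => exact realizableOn_id hs
  | mul_swap π x y _ ih =>
    exact (ih (by rw [card_image_of_injective _ (swap x y).injective, hs])).comp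
      (realizableOn_swap hu hfix hs x y)

end Realizable

/-- For a singular idempotent `e` and permutations `h, g`, the product `h∘e∘g` lies in the
semigroup generated by the `S_n`-conjugates of `e`. -/
theorem stmt15 (n : ℕ) (e : Tn n) (he : e * e = e) (hs : ¬ Function.Bijective e)
    (h g : Equiv.Perm (Fin n)) :
    ofPerm h * e * ofPerm g ∈ Subsemigroup.closure (conjClass e) := by
  obtain ⟨u, hu⟩ : ∃ u, e u ≠ u := by
    by_contra! hid
    exact hs (funext hid ▸ Function.bijective_id)
  have hfix : e (e u) = e u := congrFun he u
  obtain ⟨c, hc, hcg⟩ := realizableOn_perm hu hfix (h * g) (s := (fixedPts e).image ⇑g⁻¹)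
    (card_image_of_injective _ g⁻¹.injective)
  have hfactor : ofPerm h * e * ofPerm g = c * (ofPerm g⁻¹ * e * ofPerm g) := by
    funext x
    have hx : g⁻¹ (e (g x)) ∈ (fixedPts e).image ⇑g⁻¹ :=
      mem_image_of_mem _ (mem_fixedPts.2 (congrFun he (g x)))
    show h (e (g x)) = c (g⁻¹ (e (g x)))
    rw [hcg hx]
    simp
  rw [hfactor]
  exact mul_mem hc (Subsemigroup.subset_closure ⟨g, rfl⟩)
end

section
/- Every permutation of {1,...,n} is a product of transpositions, and consequently for any singular transformation a = e∘g (with e idempotent, g a permutation), a can be written as e composed with a product of idempotents of rank equal to rank(a). -/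
/-!
If `v` lies outside the image of `c` and `u` inside it, then `swap u v * c = f * c`, where `f` is
the idempotent that fixes the image of `swap u v * c` pointwise and sends every other point to `v`;
`f` has the rank of `c`. If neither `x` nor `y` lies outside the image of a non-surjective `c`, pick
`z` outside it: `swap x y = swap z y * swap y x * swap x z`, and each factor in turn swaps in a
point outside the current image. A product of transpositions is then handled one factor at a time.
-/

open Equiv Finset

variable {α : Type*}

theorem not_surjective_perm_mul {c : Function.End α} (hc : ¬ Function.Surjective c)
    (h : Perm α) : ¬ Function.Surjective (MulAction.toEndHom h * c) := fun hs =>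
  hc (Function.Surjective.of_comp_left (f := h) hs h.injective)

variable [DecidableEq α]

theorem Equiv.Perm.exists_list_swap_prod [Finite α] (g : Perm α) :
    ∃ L : List (α × α), (∀ p ∈ L, p.1 ≠ p.2) ∧ g = (L.map fun p => swap p.1 p.2).prod := by
  induction g using Perm.swap_induction_on with
  | one => exact ⟨[], by simp, rfl⟩
  | swap_mul f x y hxy ih =>
    obtain ⟨L, hL, rfl⟩ := ih
    exact ⟨(x, y) :: L, by simpa [hxy] using hL, rfl⟩

theorem Equiv.swap_eq_swap_mul_swap_mul_swap_s17 {x y z : α} (hzx : z ≠ x) (hzy : z ≠ y) :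
    swap x y = swap z y * swap y x * swap x z := by
  ext w
  simp only [Perm.mul_apply, swap_apply_def]
  split_ifs <;> simp_all

def retractOnto (K : Finset α) (p : α) : Function.End α := fun w => if w ∈ K then w else p

theorem retractOnto_of_mem {K : Finset α} {w : α} (p : α) (hw : w ∈ K) :
    retractOnto K p w = w := if_pos hw

theorem retractOnto_of_notMem {K : Finset α} {w : α} (p : α) (hw : w ∉ K) :
    retractOnto K p w = p := if_neg hw

theorem retractOnto_mem {K : Finset α} {p : α} (hp : p ∈ K) (w : α) :
    retractOnto K p w ∈ K := by
  unfold retractOnto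
  split_ifs with hw <;> assumption

theorem retractOnto_mul_self {K : Finset α} {p : α} (hp : p ∈ K) :
    retractOnto K p * retractOnto K p = retractOnto K p :=
  funext fun w => retractOnto_of_mem p (retractOnto_mem hp w)

theorem notMem_range_swap_comp {c : α → α} (u : α) {v : α} (hv : v ∉ Set.range c) :
    u ∉ Set.range (swap u v ∘ c) := fun ⟨w, hw⟩ =>
  hv ⟨w, (swap_apply_eq_iff.1 hw).trans (swap_apply_left u v)⟩

variable [Fintype α]

def Function.End.rank_s17 (f : Function.End α) : ℕ := #(univ.image f)

theorem rank_retractOnto {K : Finset α} {p : α} (hp : p ∈ K) : (retractOnto K p).rank_s17 = #K := by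
  refine congrArg card (ext fun w => ⟨fun hw => ?_, fun hw => ?_⟩)
  · obtain ⟨v, -, rfl⟩ := mem_image.1 hw
    exact retractOnto_mem hp v
  · exact mem_image.2 ⟨w, mem_univ w, retractOnto_of_mem p hw⟩

theorem rank_perm_mul (h : Perm α) (c : Function.End α) :
    (MulAction.toEndHom h * c).rank_s17 = c.rank_s17 := by
  have himage : univ.image (h ∘ c) = (univ.image c).image h := image_image.symm
  exact (congrArg card himage).trans (card_image_of_injective _ h.injective)

def idempotentsOfRank (r : ℕ) : Set (Function.End α) := {f | f * f = f ∧ f.rank_s17 = r}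

def ActsByIdempotents (h : Perm α) (c : Function.End α) : Prop :=
  ∃ m ∈ Submonoid.closure (idempotentsOfRank c.rank_s17), MulAction.toEndHom h * c = m * c

theorem ActsByIdempotents.one (c : Function.End α) : ActsByIdempotents 1 c :=
  ⟨1, one_mem _, by rw [map_one]⟩

theorem ActsByIdempotents.mul {h h' : Perm α} {c : Function.End α}
    (hh : ActsByIdempotents h (MulAction.toEndHom h' * c)) (hh' : ActsByIdempotents h' c) :
    ActsByIdempotents (h * h') c := by
  obtain ⟨m, hm, hmc⟩ := hh
  obtain ⟨m', hm', hmc'⟩ := hh'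
  rw [rank_perm_mul] at hm
  refine ⟨m * m', mul_mem hm hm', ?_⟩
  rw [map_mul, mul_assoc, hmc, hmc', mul_assoc]

theorem actsByIdempotents_swap_of_notMem_range {c : Function.End α} (u : α) {v : α}
    (hv : v ∉ Set.range c) : ActsByIdempotents (swap u v) c := by
  have hcv (w : α) : c w ≠ v := fun h => hv ⟨w, h⟩
  by_cases hu : u ∈ Set.range c
  · set K := univ.image (swap u v ∘ c)
    have hvK : v ∈ K := by
      obtain ⟨w, hw⟩ := hu
      exact mem_image.2 ⟨w, mem_univ w, (congrArg (swap u v) hw).trans (swap_apply_left u v)⟩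
    have hrank : (retractOnto K v).rank_s17 = c.rank_s17 := (rank_retractOnto hvK).trans (rank_perm_mul _ c)
    refine ⟨retractOnto K v, Submonoid.subset_closure ⟨retractOnto_mul_self hvK, hrank⟩, ?_⟩
    funext w
    show swap u v (c w) = retractOnto K v (c w)
    by_cases huw : c w = u
    · have huK : u ∉ K := fun hu =>
        have ⟨w', _, hw'⟩ := mem_image.1 hu
        notMem_range_swap_comp u hv ⟨w', hw'⟩
      rw [huw, swap_apply_left, retractOnto_of_notMem v huK]
    · have hfix : swap u v (c w) = c w := swap_apply_of_ne_of_ne huw (hcv w)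
      rw [hfix, retractOnto_of_mem v (mem_image.2 ⟨w, mem_univ w, hfix⟩)]
  · refine ⟨1, one_mem _, funext fun w => ?_⟩
    exact swap_apply_of_ne_of_ne (fun h => hu ⟨w, h⟩) (hcv w)

theorem actsByIdempotents_swap {c : Function.End α} (hc : ¬ Function.Surjective c) (x y : α) :
    ActsByIdempotents (swap x y) c := by
  by_cases hy : y ∉ Set.range c
  · exact actsByIdempotents_swap_of_notMem_range x hy
  by_cases hx : x ∉ Set.range c
  · exact swap_comm x y ▸ actsByIdempotents_swap_of_notMem_range y hx
  obtain ⟨z, hz⟩ : ∃ z, z ∉ Set.range c := not_forall.1 hc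
  have hzx : z ≠ x := by rintro rfl; exact hx hz
  have hzy : z ≠ y := by rintro rfl; exact hy hz
  rw [swap_eq_swap_mul_swap_mul_swap_s17 hzx hzy]
  have hxz : ActsByIdempotents (swap x z) c := actsByIdempotents_swap_of_notMem_range x hz
  have hyx : ActsByIdempotents (swap y x) (MulAction.toEndHom (swap x z) * c) :=
    actsByIdempotents_swap_of_notMem_range y (notMem_range_swap_comp x hz)
  have hzy : ActsByIdempotents (swap z y) (MulAction.toEndHom (swap y x * swap x z) * c) := by
    rw [map_mul, mul_assoc]
    exact actsByIdempotents_swap_of_notMem_range z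
      (notMem_range_swap_comp y (notMem_range_swap_comp x hz))
  exact hzy.mul (hyx.mul hxz)

theorem actsByIdempotents_of_not_surjective {c : Function.End α} (hc : ¬ Function.Surjective c)
    (h : Perm α) : ActsByIdempotents h c := by
  induction h using Perm.swap_induction_on with
  | one => exact .one c
  | swap_mul f x y _ ih => exact (actsByIdempotents_swap (not_surjective_perm_mul hc f) x y).mul ih

/-- Every permutation is a product of transpositions, and consequently every singular
`a = e∘g` is `e` followed by a product of idempotents of rank `rank a`. -/
theorem stmt17 (n : ℕ) :
    (∀ g : Equiv.Perm (Fin n), ∃ L : List (Fin n × Fin n), (∀ p ∈ L, p.1 ≠ p.2) ∧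
      g = (L.map (fun p => Equiv.swap p.1 p.2)).prod) ∧
    (∀ (a e : Tn n) (g : Equiv.Perm (Fin n)), ¬ Function.Bijective a → e * e = e →
      a = ofPerm g * e →
      ∃ L : List (Tn n), (∀ x ∈ L, x * x = x ∧ rnk x = rnk a) ∧ a = L.prod * e) := by
  refine ⟨Perm.exists_list_swap_prod, fun a e g ha _ hae => ?_⟩
  have hae' : a = MulAction.toEndHom g * e := hae
  have he : ¬ Function.Surjective e := fun he =>
    ha <| Finite.surjective_iff_bijective.1 <| by rw [hae']; exact g.surjective.comp he
  obtain ⟨m, hm, hme⟩ := actsByIdempotents_of_not_surjective he g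
  obtain ⟨L, hL, rfl⟩ := Submonoid.exists_list_of_mem_closure hm
  have hrank : rnk a = e.rank_s17 := hae' ▸ rank_perm_mul g e
  exact ⟨L, fun x hx => hrank ▸ hL x hx, hae'.trans hme⟩
end
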